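/- arXiv:2511.20370 — 9 statements merged into one kernel-verified Lean document; each statement's English description precedes it below -/
import Mathlib

section
/- For any initial point x₀ ∈ ℝⁿ, the nonlinearly preconditioned gradient flow ẋ(t) = −∇φ*(∇f(x(t))) with x(0) = x₀ admits a unique global solution x : [0, ∞) → ℝⁿ. -/
open MeasureTheory Filter Topology Set
open scoped RealInnerProductSpace

noncomputable section

/-- Projection onto the closed ball of radius `R` centered at the origin. -/
def projBall {E : Type*} [NormedAddCommGroup E] [InnerProductSpace ℝ E] (R : ℝ) (a : E) : E :=
  if ‖a‖ ≤ R then a else (R / ‖a‖) • a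

lemma projBall_of_le {E : Type*} [NormedAddCommGroup E] [InnerProductSpace ℝ E]
    {R : ℝ} {a : E} (h : ‖a‖ ≤ R) : projBall R a = a := if_pos h

lemma projBall_norm_le {E : Type*} [NormedAddCommGroup E] [InnerProductSpace ℝ E]
    {R : ℝ} (hR : 0 ≤ R) (a : E) : ‖projBall R a‖ ≤ R := by
  unfold projBall
  split_ifs with h
  · exact h
  · push_neg at h
    have ha : 0 < ‖a‖ := lt_of_le_of_lt hR h
    rw [norm_smul, Real.norm_eq_abs, abs_of_nonneg (div_nonneg hR ha.le)]
    rw [div_mul_cancel₀ _ ha.ne']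

lemma projBall_firm {E : Type*} [NormedAddCommGroup E] [InnerProductSpace ℝ E]
    {R : ℝ} (hR : 0 ≤ R) (a : E) {z : E} (hz : ‖z‖ ≤ R) :
    ⟪a - projBall R a, z - projBall R a⟫ ≤ 0 := by
  unfold projBall
  split_ifs with h
  · simp
  · push_neg at h
    have ha : 0 < ‖a‖ := lt_of_le_of_lt hR h
    have key : a - (R / ‖a‖) • a = (1 - R / ‖a‖) • a := by
      rw [sub_smul, one_smul]
    rw [key, real_inner_smul_left]
    apply mul_nonpos_of_nonneg_of_nonpos
    · have : R / ‖a‖ ≤ 1 := (div_le_one ha).mpr h.le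
      linarith
    · rw [inner_sub_right, real_inner_smul_right, real_inner_self_eq_norm_mul_norm]
      have h1 : ⟪a, z⟫ ≤ ‖a‖ * R :=
        (real_inner_le_norm a z).trans (by
          exact mul_le_mul_of_nonneg_left hz (norm_nonneg a))
      have h2 : R / ‖a‖ * (‖a‖ * ‖a‖) = R * ‖a‖ := by
        field_simp
      rw [h2]
      nlinarith [mul_le_mul_of_nonneg_right h1 (le_of_lt ha)]
lemma projBall_lipschitz {E : Type*} [NormedAddCommGroup E] [InnerProductSpace ℝ E]
    {R : ℝ} (hR : 0 ≤ R) (a b : E) :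
    ‖projBall R a - projBall R b‖ ≤ ‖a - b‖ := by
  set u := projBall R a
  set v := projBall R b
  have h1 : ⟪a - u, v - u⟫ ≤ 0 := projBall_firm hR a (projBall_norm_le hR b)
  have h2 : ⟪b - v, u - v⟫ ≤ 0 := projBall_firm hR b (projBall_norm_le hR a)
  have key : ‖u - v‖ * ‖u - v‖ ≤ ‖u - v‖ * ‖a - b‖ := by
    have e1 : (u - v : E) = (a - b) + ((u - a) + (b - v)) := by abel
    have e2 : ⟪u - v, u - v⟫ = ⟪u - v, a - b⟫ + ⟪u - v, u - a⟫ + ⟪u - v, b - v⟫ := by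
      rw [e1, inner_add_right, inner_add_right]
      ring
    have h3 : ⟪u - v, u - a⟫ ≤ 0 := by
      have : ⟪u - v, u - a⟫ = ⟪a - u, v - u⟫ := by
        rw [show (u - a : E) = -(a - u) by abel, inner_neg_right (𝕜 := ℝ),
          ← inner_neg_left (𝕜 := ℝ)]
        rw [show (-(u - v) : E) = v - u by abel, real_inner_comm]
      rw [this]; exact h1
    have h4 : ⟪u - v, b - v⟫ ≤ 0 := by
      rw [real_inner_comm]; exact h2
    have h5 : ⟪u - v, a - b⟫ ≤ ‖u - v‖ * ‖a - b‖ := real_inner_le_norm _ _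
    calc ‖u - v‖ * ‖u - v‖ = ⟪u - v, u - v⟫ := (real_inner_self_eq_norm_mul_norm _).symm
      _ ≤ ‖u - v‖ * ‖a - b‖ := by rw [e2]; linarith
  nlinarith [norm_nonneg (u - v), norm_nonneg (a - b)]

section PhiS
variable {E : Type*} [NormedAddCommGroup E] [InnerProductSpace ℝ E]
variable [CompleteSpace E] {φ : E → EReal} {φs : E → ℝ}

lemma phis_term_le (hnn : ∀ z, 0 ≤ φ z)
    (hconj : ∀ y, (φs y : EReal) = ⨆ z, (((⟪z, y⟫ : ℝ) : EReal) - φ z))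
    {z : E} (y : E) (hz : φ z ≠ ⊤) : ⟪z, y⟫ - (φ z).toReal ≤ φs y := by
  have hb : φ z ≠ ⊥ := ne_of_gt (lt_of_lt_of_le EReal.bot_lt_zero (hnn z))
  have h1 : (((⟪z, y⟫ : ℝ) : EReal) - φ z) ≤ (φs y : EReal) := by
    rw [hconj y]; exact le_iSup (fun z => (((⟪z, y⟫ : ℝ) : EReal) - φ z)) z
  rw [← EReal.coe_toReal hz hb, ← EReal.coe_sub, EReal.coe_le_coe_iff] at h1
  exact h1

lemma phis_zero (hnn : ∀ z, 0 ≤ φ z) (h0 : φ 0 = 0)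
    (hconj : ∀ y, (φs y : EReal) = ⨆ z, (((⟪z, y⟫ : ℝ) : EReal) - φ z)) : φs 0 = 0 := by
  have h1 : (φs 0 : EReal) = 0 := by
    rw [hconj 0]
    apply le_antisymm
    · apply iSup_le
      intro z
      rw [inner_zero_right]
      calc ((0 : ℝ) : EReal) - φ z ≤ ((0:ℝ):EReal) - 0 := by
            apply EReal.sub_le_sub le_rfl (hnn z)
        _ = 0 := by simp
    · calc (0 : EReal) = ((⟪(0:E), (0:E)⟫ : ℝ) : EReal) - φ 0 := by
            rw [inner_zero_right, h0]; simp
        _ ≤ _ := le_iSup (fun z => (((⟪z, (0:E)⟫ : ℝ) : EReal) - φ z)) 0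
  exact_mod_cast h1

lemma phis_nonneg (hnn : ∀ z, 0 ≤ φ z) (h0 : φ 0 = 0)
    (hconj : ∀ y, (φs y : EReal) = ⨆ z, (((⟪z, y⟫ : ℝ) : EReal) - φ z)) (y : E) :
    0 ≤ φs y := by
  have := phis_term_le hnn hconj (z := 0) y (by simp [h0])
  rw [inner_zero_left, h0] at this
  simpa using this

lemma phis_conv (hnn : ∀ z, 0 ≤ φ z) (h0 : φ 0 = 0)
    (hconj : ∀ y, (φs y : EReal) = ⨆ z, (((⟪z, y⟫ : ℝ) : EReal) - φ z))
    (p : E) {l : ℝ} (hl0 : 0 ≤ l) (hl1 : l ≤ 1) :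
    φs ((1 - l) • p) ≤ (1 - l) * φs p := by
  have h1 : (φs ((1 - l) • p) : EReal) ≤ (((1 - l) * φs p : ℝ) : EReal) := by
    rw [hconj]
    apply iSup_le
    intro z
    by_cases hz : φ z = ⊤
    · rw [hz, EReal.sub_top]; exact bot_le
    · have hb : φ z ≠ ⊥ := ne_of_gt (lt_of_lt_of_le EReal.bot_lt_zero (hnn z))
      have hc : 0 ≤ (φ z).toReal := by
        have := EReal.coe_toReal hz hb
        have h2 : ((0:ℝ):EReal) ≤ ((φ z).toReal : EReal) := by rw [this]; exact_mod_cast hnn z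
        exact_mod_cast h2
      have hA : ⟪z, p⟫ - (φ z).toReal ≤ φs p := phis_term_le hnn hconj p hz
      rw [← EReal.coe_toReal hz hb, ← EReal.coe_sub, EReal.coe_le_coe_iff,
        real_inner_smul_right]
      nlinarith
  exact_mod_cast h1

lemma phis_inner_nonneg (hnn : ∀ z, 0 ≤ φ z) (h0 : φ 0 = 0)
    (hconj : ∀ y, (φs y : EReal) = ⨆ z, (((⟪z, y⟫ : ℝ) : EReal) - φ z))
    {gφs : E → E} (hg : ∀ y, HasGradientAt φs (gφs y) y) (p : E) :
    0 ≤ ⟪p, gφs p⟫ := by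
  -- q l := φs ((1 - l) • p) = φs (p + l • (-p)), q'(0) = ⟪gφs p, -p⟫ ≤ 0 via slopes
  set q : ℝ → ℝ := fun l => φs (p + l • (-p)) with hq
  have hc : HasDerivAt (fun l : ℝ => p + l • (-p)) (-p) 0 := by
    simpa using ((hasDerivAt_id (0:ℝ)).smul_const (-p)).const_add p
  have hφd : HasFDerivAt φs (InnerProductSpace.toDual ℝ E (gφs p)) p := (hg p).hasFDerivAt
  have hqd : HasDerivAt q (⟪gφs p, -p⟫) 0 := by
    have h0pt : p + (0:ℝ) • (-p) = p := by simp
    have := HasFDerivAt.comp_hasDerivAt (0:ℝ) (h0pt ▸ hφd) hc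
    simpa [hq, InnerProductSpace.toDual_apply_apply, Function.comp_def] using this
  have hslope : ∀ l ∈ Ioo (0:ℝ) 1, slope q 0 l ≤ 0 := by
    intro l hl
    have hpt : p + l • (-p) = (1 - l) • p := by module
    have hkey : q l ≤ q 0 := by
      simp only [hq, hpt, zero_smul, add_zero]
      have h2 := phis_conv hnn h0 hconj p hl.1.le hl.2.le
      have h3 : (1 - l) * φs p ≤ φs p := by
        have := phis_nonneg hnn h0 hconj p
        nlinarith [hl.1, hl.2]
      linarith
    rw [slope_def_field]
    apply div_nonpos_of_nonpos_of_nonneg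
    · linarith
    · linarith [hl.1]
  have htend : Tendsto (slope q 0) (𝓝[Ioi 0] 0) (𝓝 (⟪gφs p, -p⟫)) := by
    have := (hqd.hasDerivWithinAt (s := Ioi 0))
    rw [hasDerivWithinAt_iff_tendsto_slope] at this
    simpa [Set.diff_singleton_eq_self (by simp : (0:ℝ) ∉ Ioi (0:ℝ))] using this
  have hle : ⟪gφs p, -p⟫ ≤ 0 := by
    refine le_of_tendsto htend ?_
    filter_upwards [Ioo_mem_nhdsGT_of_mem (by norm_num : (0:ℝ) ∈ Ico (0:ℝ) 1)] with l hl
    exact hslope l hl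
  rw [inner_neg_right (𝕜 := ℝ)] at hle
  have : 0 ≤ ⟪gφs p, p⟫ := by linarith
  rwa [real_inner_comm] at this

end PhiS


theorem stmt_0 (n : ℕ)
    (f : EuclideanSpace ℝ (Fin n) → ℝ) (f' : EuclideanSpace ℝ (Fin n) → EuclideanSpace ℝ (Fin n))
    (hf : ContDiff ℝ 2 f)
    (hf' : ∀ z, HasGradientAt f (f' z) z)
    (hf_lb : ∀ α : ℝ, Bornology.IsBounded {z | f z ≤ α})
    (φ : EuclideanSpace ℝ (Fin n) → EReal)
    (hφ_proper : ∃ z, φ z ≠ ⊤)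
    (hφ_lsc : LowerSemicontinuous φ)
    (hφ_nonneg : ∀ z, 0 ≤ φ z)
    (hφ_even : ∀ z, φ (-z) = φ z)
    (hφ_zero : φ 0 = 0)
    (hφ_es_dom : (interior {z | φ z ≠ ⊤}).Nonempty)
    (hφ_es_diff : DifferentiableOn ℝ (fun z => (φ z).toReal) (interior {z | φ z ≠ ⊤}))
    (hφ_es_blow : ∀ w ∈ frontier {z | φ z ≠ ⊤}, ∀ seq : ℕ → EuclideanSpace ℝ (Fin n),
      (∀ k, seq k ∈ interior {z | φ z ≠ ⊤}) → Tendsto seq atTop (𝓝 w) →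
      Tendsto (fun k => ‖gradient (fun z => (φ z).toReal) (seq k)‖) atTop atTop)
    (μφ : ℝ) (hμφ : 0 < μφ)
    (hφ_sconv : ∀ z w : EuclideanSpace ℝ (Fin n), ∀ t : ℝ, 0 ≤ t → t ≤ 1 →
      φ (t • z + (1 - t) • w) + ((μφ / 2 * (t * (1 - t)) * ‖z - w‖ ^ 2 : ℝ) : EReal)
        ≤ (t : EReal) * φ z + ((1 - t : ℝ) : EReal) * φ w)
    (φs : EuclideanSpace ℝ (Fin n) → ℝ)
    (hφs_conj : ∀ y, (φs y : EReal) = ⨆ z, (((⟪z, y⟫ : ℝ) : EReal) - φ z))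
    (gφs : EuclideanSpace ℝ (Fin n) → EuclideanSpace ℝ (Fin n))
    (hgφs : ∀ y, HasGradientAt φs (gφs y) y)
    (hg_lip : ∀ y w, ‖gφs y - gφs w‖ ≤ (1 / μφ) * ‖y - w‖)
    (hg_zero : gφs 0 = 0)
    (x₀ : EuclideanSpace ℝ (Fin n))
    :
    ∃ x : ℝ → EuclideanSpace ℝ (Fin n),
      (x 0 = x₀ ∧ ∀ t ∈ Ici (0:ℝ), HasDerivWithinAt x (-gφs (f' (x t))) (Ici 0) t) ∧
        ∀ y : ℝ → EuclideanSpace ℝ (Fin n), y 0 = x₀ →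
          (∀ t ∈ Ici (0:ℝ), HasDerivWithinAt y (-gφs (f' (y t))) (Ici 0) t) →
          EqOn y x (Ici 0) := by
  classical
  have hkey : ∀ p : EuclideanSpace ℝ (Fin n), 0 ≤ ⟪p, gφs p⟫ :=
    phis_inner_nonneg hφ_nonneg hφ_zero hφs_conj hgφs
  -- f' is C¹
  have hf'eq : f' = fun z => (InnerProductSpace.toDual ℝ _).symm (fderiv ℝ f z) := by
    funext z
    have h1 : fderiv ℝ f z = InnerProductSpace.toDual ℝ _ (f' z) := (hf' z).hasFDerivAt.fderiv
    rw [h1, LinearIsometryEquiv.symm_apply_apply]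
  have hf'cd : ContDiff ℝ 1 f' := by
    rw [hf'eq]
    exact (InnerProductSpace.toDual ℝ _).symm.contDiff.comp
      (hf.fderiv_right (by norm_num))
  -- radius
  obtain ⟨r, hr⟩ := (hf_lb (f x₀)).subset_closedBall 0
  set r' : ℝ := max r 0 with hr'def
  set R : ℝ := r' + 1 with hRdef
  have hr'0 : 0 ≤ r' := le_max_right r 0
  have hR0 : 0 < R := by rw [hRdef]; linarith
  have hsub : ∀ z, f z ≤ f x₀ → ‖z‖ ≤ r' := by
    intro z hz
    have h1 := hr hz
    rw [Metric.mem_closedBall, dist_zero_right] at h1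
    exact le_trans h1 (le_max_left r 0)
  set B : Set (EuclideanSpace ℝ (Fin n)) := Metric.closedBall 0 R with hBdef
  have hBc : IsCompact B := isCompact_closedBall _ _
  have hBne : B.Nonempty := ⟨0, Metric.mem_closedBall_self hR0.le⟩
  -- Lipschitz bound for f' on B
  obtain ⟨zM, hzM, hzMmax⟩ := hBc.exists_isMaxOn hBne
    ((hf'cd.continuous_fderiv one_ne_zero).norm.continuousOn)
  set M : ℝ := ‖fderiv ℝ f' zM‖ with hMdef
  have hM0 : 0 ≤ M := norm_nonneg _
  have hf'lip : ∀ a ∈ B, ∀ b ∈ B, ‖f' b - f' a‖ ≤ M * ‖b - a‖ := by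
    intro a ha b hb
    exact (convex_closedBall _ _).norm_image_sub_le_of_norm_hasFDerivWithin_le
      (fun z hz => ((hf'cd.differentiable one_ne_zero) z).hasFDerivAt.hasFDerivWithinAt)
      (fun z hz => hzMmax hz) ha hb
  -- vector fields
  set F : EuclideanSpace ℝ (Fin n) → EuclideanSpace ℝ (Fin n) := fun z => -gφs (f' z) with hFdef
  set P : EuclideanSpace ℝ (Fin n) → EuclideanSpace ℝ (Fin n) := fun z => projBall R z with hPdef
  set G : EuclideanSpace ℝ (Fin n) → EuclideanSpace ℝ (Fin n) := fun z => F (P z) with hGdef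
  have hgcont : Continuous gφs := by
    apply LipschitzWith.continuous (K := Real.toNNReal (1/μφ))
    apply LipschitzWith.of_dist_le_mul
    intro a b
    rw [dist_eq_norm, dist_eq_norm, Real.coe_toNNReal _ (by positivity)]
    exact hg_lip a b
  have hFcont : Continuous F := (hgcont.comp hf'cd.continuous).neg
  obtain ⟨zC, hzC, hzCmax⟩ := hBc.exists_isMaxOn hBne hFcont.norm.continuousOn
  set C : ℝ := ‖F zC‖ with hCdef
  have hC0 : 0 ≤ C := norm_nonneg _
  have hPB : ∀ z, P z ∈ B := by
    intro z
    rw [hBdef, Metric.mem_closedBall, dist_zero_right]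
    exact projBall_norm_le hR0.le z
  have hGbound : ∀ z, ‖G z‖ ≤ C := fun z => hzCmax (hPB z)
  set LG : ℝ := M / μφ with hLGdef
  have hLG0 : 0 ≤ LG := div_nonneg hM0 hμφ.le
  have hGlip : ∀ a b, ‖G a - G b‖ ≤ LG * ‖a - b‖ := by
    intro a b
    have e1 : G a - G b = gφs (f' (P b)) - gφs (f' (P a)) := by
      simp only [hGdef, hFdef]
      abel
    rw [e1]
    calc ‖gφs (f' (P b)) - gφs (f' (P a))‖ ≤ (1/μφ) * ‖f' (P b) - f' (P a)‖ := hg_lip _ _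
      _ ≤ (1/μφ) * (M * ‖P b - P a‖) := by
          apply mul_le_mul_of_nonneg_left (hf'lip _ (hPB a) _ (hPB b)) (by positivity)
      _ ≤ (1/μφ) * (M * ‖a - b‖) := by
          apply mul_le_mul_of_nonneg_left _ (by positivity)
          apply mul_le_mul_of_nonneg_left _ hM0
          rw [norm_sub_rev]
          exact projBall_lipschitz hR0.le a b
      _ = LG * ‖a - b‖ := by rw [hLGdef]; ring
  have hGlipW : LipschitzWith (Real.toNNReal LG) G := by
    apply LipschitzWith.of_dist_le_mul
    intro a b
    rw [dist_eq_norm, dist_eq_norm, Real.coe_toNNReal _ hLG0]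
    exact hGlip a b
  have hGF : ∀ z, ‖z‖ ≤ R → G z = F z := by
    intro z hz
    simp only [hGdef, hPdef, projBall_of_le hz]
  -- derivative of f along a curve
  have hderivF : ∀ (y : ℝ → EuclideanSpace ℝ (Fin n)) (t : ℝ) (V : EuclideanSpace ℝ (Fin n)),
      HasDerivAt y V t → HasDerivAt (fun s => f (y s)) ⟪f' (y t), V⟫ t := by
    intro y t V hy
    have := ((hf' (y t)).hasFDerivAt).comp_hasDerivAt t hy
    simpa [InnerProductSpace.toDual_apply_apply, Function.comp_def] using this
  -- Picard–Lindelöf solutions on [0, k]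
  have hpl : ∀ k : ℕ, ∃ u : ℝ → EuclideanSpace ℝ (Fin n), u 0 = x₀ ∧
      ∀ t ∈ Icc (0:ℝ) k, HasDerivWithinAt u (G (u t)) (Icc (0:ℝ) k) t := by
    intro k
    have hplk : IsPicardLindelof (fun _ z => G z) (tmin := 0) (tmax := (k:ℝ))
        ⟨0, ⟨le_refl 0, Nat.cast_nonneg k⟩⟩ x₀ (Real.toNNReal (C * k)) 0 (Real.toNNReal C)
        (Real.toNNReal LG) :=
      { lipschitzOnWith := fun t _ => hGlipW.lipschitzOnWith
        continuousOn := fun z _ => continuousOn_const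
        norm_le := fun t _ z _ => by rw [Real.coe_toNNReal _ hC0]; exact hGbound z
        mul_max_le := by
          rw [Real.coe_toNNReal _ hC0, Real.coe_toNNReal _ (mul_nonneg hC0 (Nat.cast_nonneg k))]
          simp only [sub_zero, NNReal.coe_zero, max_eq_left (Nat.cast_nonneg k)]
          exact le_refl _ }
    exact hplk.exists_eq_forall_mem_Icc_hasDerivWithinAt₀
  choose sol hsol0 hsolD using hpl
  -- upgrade derivatives to within `Ici t`
  have upg : ∀ (u : ℝ → EuclideanSpace ℝ (Fin n)) (k : ℕ),
      (∀ t ∈ Icc (0:ℝ) k, HasDerivWithinAt u (G (u t)) (Icc (0:ℝ) k) t) →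
      ∀ t : ℝ, 0 ≤ t → t < (k:ℝ) → HasDerivWithinAt u (G (u t)) (Ici t) t := by
    intro u k hu t ht0 htk
    have h1 : HasDerivWithinAt u (G (u t)) (Icc t k) t :=
      (hu t ⟨ht0, htk.le⟩).mono (Icc_subset_Icc_left ht0)
    apply h1.mono_of_mem_nhdsWithin
    rw [← Ici_inter_Iic]
    exact inter_mem_nhdsWithin _ (Iic_mem_nhds htk)
  -- solutions agree
  have hagree : ∀ (j k : ℕ) (t : ℝ), 0 ≤ t → t ≤ j → t ≤ k → sol j t = sol k t := by
    intro j k t ht0 htj htk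
    have hmin : (t:ℝ) ≤ min (j:ℝ) k := le_min htj htk
    have hcont : ∀ m : ℕ, ContinuousOn (sol m) (Icc (0:ℝ) m) := fun m s hs =>
      (hsolD m s hs).continuousWithinAt
    have := ODE_solution_unique_of_mem_Icc_right
      (v := fun _ z => G z) (s := fun _ => (univ : Set (EuclideanSpace ℝ (Fin n))))
      (K := Real.toNNReal LG) (fun _ _ => (hGlipW.lipschitzOnWith))
      ((hcont j).mono (Icc_subset_Icc_right (min_le_left _ _)))
      (fun s hs => upg (sol j) j (hsolD j) s hs.1 (lt_of_lt_of_le hs.2 (min_le_left _ _)))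
      (fun _ _ => mem_univ _)
      ((hcont k).mono (Icc_subset_Icc_right (min_le_right _ _)))
      (fun s hs => upg (sol k) k (hsolD k) s hs.1 (lt_of_lt_of_le hs.2 (min_le_right _ _)))
      (fun _ _ => mem_univ _)
      (by rw [hsol0 j, hsol0 k])
    exact this ⟨ht0, hmin⟩
  -- the glued solution
  set x : ℝ → EuclideanSpace ℝ (Fin n) := fun t => sol (⌈t⌉₊ + 1) t with hxdef
  have hceil : ∀ t : ℝ, t < ((⌈t⌉₊ + 1 : ℕ) : ℝ) := by
    intro t
    rcases le_or_gt t 0 with h | h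
    · calc t ≤ 0 := h
        _ < _ := by positivity
    · calc t ≤ (⌈t⌉₊ : ℝ) := Nat.le_ceil t
        _ < _ := by push_cast; linarith
  have hxeq : ∀ (m : ℕ) (t : ℝ), 0 ≤ t → t ≤ m → x t = sol m t := by
    intro m t ht0 htm
    exact hagree _ m t ht0 (hceil t).le htm
  have hx0 : x 0 = x₀ := by
    rw [hxdef]; simp only []
    rw [show ((⌈(0:ℝ)⌉₊ + 1 : ℕ)) = 1 by norm_num]
    exact hsol0 1
  have hxG : ∀ t, 0 ≤ t → HasDerivWithinAt x (G (x t)) (Ici 0) t := by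
    intro t ht
    set m : ℕ := ⌈t⌉₊ + 1 with hm
    have htm : t < (m:ℝ) := hceil t
    have h1 : HasDerivWithinAt (sol m) (G (sol m t)) (Icc (0:ℝ) m) t := hsolD m t ⟨ht, htm.le⟩
    have h2 : HasDerivWithinAt x (G (x t)) (Icc (0:ℝ) m) t := by
      rw [hxeq m t ht htm.le]
      exact h1.congr (fun s hs => hxeq m s hs.1 hs.2) (hxeq m t ht htm.le)
    apply h2.mono_of_mem_nhdsWithin
    rw [← Ici_inter_Iic]
    exact inter_mem_nhdsWithin _ (Iic_mem_nhds htm)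
  have hxcont : ContinuousOn x (Ici 0) := fun t ht => (hxG t ht).continuousWithinAt
  have hxDA : ∀ t, 0 < t → HasDerivAt x (G (x t)) t := fun t ht =>
    (hxG t ht.le).hasDerivAt (Ici_mem_nhds ht)
  -- invariance of the sublevel set
  have hinv : ∀ T, 0 ≤ T → ∀ t ∈ Icc (0:ℝ) T, f (x t) ≤ f x₀ := by
    intro T hT
    set S : Set ℝ := {t | t ∈ Icc (0:ℝ) T ∧ ∀ s ∈ Icc (0:ℝ) t, f (x s) ≤ f x₀} with hSdef
    have h0S : (0:ℝ) ∈ S := by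
      refine ⟨⟨le_refl 0, hT⟩, fun s hs => ?_⟩
      have hs0 : s = 0 := le_antisymm hs.2 hs.1
      rw [hs0, hx0]
    have hbdd : BddAbove S := ⟨T, fun t ht => ht.1.2⟩
    set τ : ℝ := sSup S with hτdef
    have hτ0 : 0 ≤ τ := le_csSup hbdd h0S
    have hτT : τ ≤ T := csSup_le ⟨0, h0S⟩ fun t ht => ht.1.2
    have hlt : ∀ s, 0 ≤ s → s < τ → f (x s) ≤ f x₀ := by
      intro s hs0 hsτ
      obtain ⟨t, htS, hst⟩ := exists_lt_of_lt_csSup ⟨0, h0S⟩ hsτ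
      exact htS.2 s ⟨hs0, hst.le⟩
    have hτf : f (x τ) ≤ f x₀ := by
      rcases eq_or_lt_of_le hτ0 with h | h
      · rw [← h, hx0]
      · have hA : IsClosed (Icc (0:ℝ) τ ∩ (fun s => f (x s)) ⁻¹' Iic (f x₀)) := by
          apply ContinuousOn.preimage_isClosed_of_isClosed
            (hf.continuous.comp_continuousOn (hxcont.mono (Icc_subset_Ici_self)))
            isClosed_Icc isClosed_Iic
        have hsubA : Ico (0:ℝ) τ ⊆ Icc (0:ℝ) τ ∩ (fun s => f (x s)) ⁻¹' Iic (f x₀) :=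
          fun s hs => ⟨⟨hs.1, hs.2.le⟩, hlt s hs.1 hs.2⟩
        have hτcl : τ ∈ closure (Ico (0:ℝ) τ) := by
          rw [closure_Ico (ne_of_lt h)]
          exact ⟨hτ0, le_refl τ⟩
        have := hA.closure_subset ((closure_mono hsubA) hτcl)
        exact this.2
    have hgood : ∀ s, 0 ≤ s → s ≤ τ → f (x s) ≤ f x₀ := by
      intro s h0 hle
      rcases lt_or_eq_of_le hle with h | h
      · exact hlt s h0 h
      · rw [h]; exact hτf
    have hτeq : τ = T := by
      by_contra hne
      have hlt2 : τ < T := lt_of_le_of_ne hτT hne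
      have hcw : ContinuousWithinAt x (Ici 0) τ := hxcont τ hτ0
      rw [Metric.continuousWithinAt_iff] at hcw
      obtain ⟨δ₀, hδ₀, hδprop⟩ := hcw 1 one_pos
      set δ : ℝ := min (δ₀ / 2) (T - τ) with hδdef
      have hδpos : 0 < δ := lt_min (half_pos hδ₀) (sub_pos.mpr hlt2)
      have hτδT : τ + δ ≤ T := by
        have := min_le_right (δ₀/2) (T - τ)
        rw [hδdef]
        linarith [this]
      have hxB : ∀ s, 0 ≤ s → s ≤ τ + δ → ‖x s‖ ≤ R := by
        intro s h0 hs
        rcases le_or_gt s τ with h | h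
        · calc ‖x s‖ ≤ r' := hsub _ (hgood s h0 h)
            _ ≤ R := by rw [hRdef]; linarith
        · have hd : dist s τ < δ₀ := by
            rw [Real.dist_eq, abs_of_nonneg (by linarith : (0:ℝ) ≤ s - τ)]
            have := min_le_left (δ₀/2) (T - τ)
            rw [hδdef] at hs
            linarith [min_le_left (δ₀/2) (T - τ)]
          have h1 : dist (x s) (x τ) < 1 := hδprop h0 hd
          have h2 : ‖x τ‖ ≤ r' := hsub _ hτf
          calc ‖x s‖ ≤ ‖x τ‖ + dist (x s) (x τ) := by
                rw [dist_eq_norm]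
                have := norm_sub_norm_le (x s) (x τ)
                linarith [norm_sub_norm_le (x s) (x τ)]
            _ ≤ r' + 1 := by linarith
            _ = R := by rw [hRdef]
      have hanti : AntitoneOn (fun s => f (x s)) (Icc 0 (τ + δ)) := by
        apply antitoneOn_of_deriv_nonpos (convex_Icc _ _)
        · exact hf.continuous.comp_continuousOn (hxcont.mono Icc_subset_Ici_self)
        · intro s hs
          rw [interior_Icc] at hs
          exact (hderivF x s _ (hxDA s hs.1)).differentiableAt.differentiableWithinAt
        · intro s hs
          rw [interior_Icc] at hs
          have hDA : HasDerivAt (fun s => f (x s)) (⟪f' (x s), G (x s)⟫) s := hderivF x s (G (x s)) (hxDA s hs.1)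
          rw [hDA.deriv, hGF _ (hxB s hs.1.le hs.2.le)]
          have hval : ⟪f' (x s), F (x s)⟫ = -⟪f' (x s), gφs (f' (x s))⟫ := by
            simp only [hFdef]
            exact inner_neg_right _ _
          rw [hval]
          exact neg_nonpos.mpr (hkey _)
      have hfinal : τ + δ ∈ S := by
        refine ⟨⟨by linarith, hτδT⟩, fun s hs => ?_⟩
        have h1 : f (x s) ≤ f (x 0) :=
          hanti ⟨le_refl 0, by linarith⟩ ⟨hs.1, hs.2⟩ hs.1
        rwa [hx0] at h1
      have := le_csSup hbdd hfinal
      linarith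
    intro t ht
    exact hgood t ht.1 (le_of_le_of_eq ht.2 hτeq.symm)
  have hxball : ∀ t, 0 ≤ t → ‖x t‖ ≤ R := by
    intro t ht
    calc ‖x t‖ ≤ r' := hsub _ (hinv t ht t ⟨ht, le_refl t⟩)
      _ ≤ R := by rw [hRdef]; linarith
  -- conclude
  refine ⟨x, ⟨hx0, fun t ht => ?_⟩, ?_⟩
  · have h1 := hxG t ht
    rw [hGF _ (hxball t ht)] at h1
    exact h1
  · intro y hy0 hyD
    have hycont : ContinuousOn y (Ici 0) := fun t ht => (hyD t ht).continuousWithinAt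
    have hyanti : AntitoneOn (fun s => f (y s)) (Ici 0) := by
      apply antitoneOn_of_deriv_nonpos (convex_Ici 0)
        (hf.continuous.comp_continuousOn hycont)
      · intro s hs
        rw [interior_Ici] at hs
        have hDA : HasDerivAt y (-gφs (f' (y s))) s :=
          (hyD s (le_of_lt hs : (0:ℝ) ≤ s)).hasDerivAt (Ici_mem_nhds hs)
        exact (hderivF y s _ hDA).differentiableAt.differentiableWithinAt
      · intro s hs
        rw [interior_Ici] at hs
        have hDA : HasDerivAt y (-gφs (f' (y s))) s :=
          (hyD s (le_of_lt hs : (0:ℝ) ≤ s)).hasDerivAt (Ici_mem_nhds hs)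
        have hd : HasDerivAt (f ∘ y) (⟪f' (y s), -gφs (f' (y s))⟫) s := hderivF y s _ hDA
        rw [hd.deriv, inner_neg_right]
        exact neg_nonpos.mpr (hkey _)
    have hyball : ∀ t, 0 ≤ t → ‖y t‖ ≤ R := by
      intro t ht
      have h1 : f (y t) ≤ f (y 0) := hyanti self_mem_Ici ht ht
      rw [hy0] at h1
      calc ‖y t‖ ≤ r' := hsub _ h1
        _ ≤ R := by rw [hRdef]; linarith
    have hyG : ∀ t, 0 ≤ t → HasDerivWithinAt y (G (y t)) (Ici 0) t := by
      intro t ht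
      rw [hGF _ (hyball t ht)]
      exact hyD t ht
    intro t ht
    have := ODE_solution_unique_of_mem_Icc_right
      (v := fun _ z => G z) (s := fun _ => (univ : Set (EuclideanSpace ℝ (Fin n))))
      (K := Real.toNNReal LG) (a := (0:ℝ)) (b := t) (f := y) (g := x)
      (fun _ _ => (hGlipW.lipschitzOnWith))
      (hycont.mono Icc_subset_Ici_self)
      (fun s hs => (hyG s hs.1).mono (Ici_subset_Ici.mpr hs.1))
      (fun _ _ => mem_univ _)
      (hxcont.mono Icc_subset_Ici_self)
      (fun s hs => (hxG s hs.1).mono (Ici_subset_Ici.mpr hs.1))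
      (fun _ _ => mem_univ _)
      (by rw [hy0, hx0])
    exact this ⟨ht, le_refl t⟩
end
end

section
/- Let x : [0, ∞) → ℝⁿ be the unique global solution of ẋ(t) = −∇φ*(∇f(x(t))) with x(0) = x₀. Then ∫₀^∞ ‖ẋ(s)‖² ds ≤ (f(x₀) − f⋆)/μ_φ < ∞; in particular ẋ ∈ L²([0,∞), ℝⁿ). -/
open MeasureTheory Filter Topology Set
open scoped RealInnerProductSpace

noncomputable section

variable {E : Type*} [NormedAddCommGroup E] [InnerProductSpace ℝ E] [CompleteSpace E]

/-- Subgradient inequality for a differentiable convex function. -/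
lemma grad_lower {ψ : E → ℝ} {g : E → E}
    (hconv : ConvexOn ℝ univ ψ) (hg : ∀ y, HasGradientAt ψ (g y) y) (u v : E) :
    ψ u + ⟪g u, v - u⟫ ≤ ψ v := by
  set h : ℝ → ℝ := fun t => ψ (u + t • (v - u)) with hh
  have hconv1 : ConvexOn ℝ univ h := by
    have h2 := hconv.comp_affineMap (AffineMap.lineMap u v : ℝ →ᵃ[ℝ] E)
    rw [preimage_univ] at h2
    have hfun : h = ψ ∘ ⇑(AffineMap.lineMap u v : ℝ →ᵃ[ℝ] E) := by
      funext t
      simp [hh, AffineMap.lineMap_apply, add_comm]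
    rw [hfun]; exact h2
  have hc : HasDerivAt (fun t : ℝ => u + t • (v - u)) (v - u) 0 := by
    simpa using ((hasDerivAt_id (0:ℝ)).smul_const (v - u)).const_add u
  have hψ : HasDerivAt h ⟪g u, v - u⟫ 0 := by
    have := ((hg (u + (0:ℝ) • (v - u))).hasFDerivAt).comp_hasDerivAt 0 hc
    simpa [InnerProductSpace.toDual_apply_apply, Function.comp_def, hh] using this
  have hs := hconv1.le_slope_of_hasDerivAt (mem_univ (0:ℝ)) (mem_univ 1) one_pos hψ
  rw [slope_def_field] at hs
  have h1 : h 1 = ψ v := by simp [hh]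
  have h0 : h 0 = ψ u := by simp [hh]
  rw [h1, h0] at hs
  simp at hs
  linarith

/-- Descent lemma for a function with Lipschitz gradient. -/
lemma grad_descent {ψ : E → ℝ} {g : E → E}
    (hg : ∀ y, HasGradientAt ψ (g y) y) {L : ℝ} (hL : 0 ≤ L)
    (hlip : ∀ y w, ‖g y - g w‖ ≤ L * ‖y - w‖) (u v : E) :
    ψ v ≤ ψ u + ⟪g u, v - u⟫ + L / 2 * ‖v - u‖ ^ 2 := by
  set d := v - u with hd
  set c : ℝ → E := fun t => u + t • d with hcdef
  have hc : ∀ t : ℝ, HasDerivAt c d t := fun t => by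
    simpa [hcdef] using ((hasDerivAt_id t).smul_const d).const_add u
  have hgcont : Continuous g := by
    have : LipschitzWith (Real.toNNReal L) g := by
      apply LipschitzWith.of_dist_le_mul
      intro a b
      rw [dist_eq_norm, dist_eq_norm, Real.coe_toNNReal L hL]
      exact hlip a b
    exact this.continuous
  have hccont : Continuous c := continuous_const.add (continuous_id.smul continuous_const)
  have hψ' : ∀ t : ℝ, HasDerivAt (fun t => ψ (c t)) ⟪g (c t), d⟫ t := fun t => by
    have := ((hg (c t)).hasFDerivAt).comp_hasDerivAt t (hc t)
    simpa [InnerProductSpace.toDual_apply_apply, Function.comp_def] using this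
  have hintcont : Continuous fun t : ℝ => ⟪g (c t), d⟫ :=
    (hgcont.comp hccont).inner continuous_const
  have hftc : ∫ t in (0:ℝ)..1, ⟪g (c t), d⟫ = ψ (c 1) - ψ (c 0) :=
    intervalIntegral.integral_eq_sub_of_hasDerivAt (fun t _ => hψ' t)
      (hintcont.intervalIntegrable 0 1)
  have hcont2 : Continuous fun t : ℝ => ⟪g u, d⟫ + (L * ‖d‖ ^ 2) * t := by continuity
  have hbound : ∫ t in (0:ℝ)..1, ⟪g (c t), d⟫ ≤
      ∫ t in (0:ℝ)..1, (⟪g u, d⟫ + (L * ‖d‖ ^ 2) * t) := by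
    apply intervalIntegral.integral_mono_on zero_le_one (hintcont.intervalIntegrable 0 1)
      (hcont2.intervalIntegrable 0 1)
    intro t ht
    have h1 : ⟪g (c t) - g u, d⟫ ≤ ‖g (c t) - g u‖ * ‖d‖ := real_inner_le_norm _ _
    have h2 : ‖g (c t) - g u‖ ≤ L * ‖c t - u‖ := hlip (c t) u
    have h3 : ‖c t - u‖ = t * ‖d‖ := by
      rw [hcdef]
      simp [norm_smul, abs_of_nonneg ht.1]
    have h4 : ⟪g (c t), d⟫ = ⟪g u, d⟫ + ⟪g (c t) - g u, d⟫ := by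
      rw [inner_sub_left]; ring
    rw [h4]
    have h5 := mul_le_mul_of_nonneg_right h2 (norm_nonneg d)
    rw [h3] at h5
    nlinarith [h1, h5]
  have hval : ∫ t in (0:ℝ)..1, (⟪g u, d⟫ + (L * ‖d‖ ^ 2) * t)
      = ⟪g u, d⟫ + L / 2 * ‖d‖ ^ 2 := by
    rw [intervalIntegral.integral_add (f := fun _ => ⟪g u, d⟫) (g := fun t : ℝ => L * ‖d‖ ^ 2 * t) (intervalIntegrable_const)
      (((continuous_const.mul continuous_id).intervalIntegrable 0 1 :
        IntervalIntegrable (fun t : ℝ => L * ‖d‖ ^ 2 * t) volume 0 1)),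
      intervalIntegral.integral_const, intervalIntegral.integral_const_mul,
      integral_id]
    simp
    ring
  have hc1 : c 1 = v := by simp [hcdef, hd]
  have hc0 : c 0 = u := by simp [hcdef]
  rw [hc1, hc0] at hftc
  rw [hval] at hbound
  linarith

/-- Cocoercivity of the gradient of a convex function with Lipschitz gradient. -/
lemma grad_cocoercive {ψ : E → ℝ} {g : E → E}
    (hconv : ConvexOn ℝ univ ψ) (hg : ∀ y, HasGradientAt ψ (g y) y)
    {μ : ℝ} (hμ : 0 < μ) (hlip : ∀ y w, ‖g y - g w‖ ≤ (1 / μ) * ‖y - w‖) (y w : E) :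
    μ * ‖g y - g w‖ ^ 2 ≤ ⟪g y - g w, y - w⟫ := by
  have hL : (0:ℝ) ≤ 1 / μ := by positivity
  have key : ∀ p q : E, ψ q + ⟪g q, p - q⟫ + μ / 2 * ‖g p - g q‖ ^ 2 ≤ ψ p := by
    intro p q
    set d := g p - g q with hd
    set v := p - μ • d with hv
    have hdesc := grad_descent hg hL hlip p v
    have hlow := grad_lower hconv hg q v
    have h1 : v - p = -(μ • d) := by rw [hv]; abel
    have h2 : ⟪g p, v - p⟫ = -(μ * ⟪g p, d⟫) := by
      rw [h1, inner_neg_right, real_inner_smul_right]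
    have h3 : ‖v - p‖ ^ 2 = μ ^ 2 * ‖d‖ ^ 2 := by
      rw [h1, norm_neg, norm_smul]
      simp [abs_of_pos hμ]
      ring
    have h4 : v - q = (p - q) - μ • d := by rw [hv]; abel
    have h5 : ⟪g q, v - q⟫ = ⟪g q, p - q⟫ - μ * ⟪g q, d⟫ := by
      rw [h4, inner_sub_right, real_inner_smul_right]
    have h6 : ⟪g p, d⟫ - ⟪g q, d⟫ = ‖d‖ ^ 2 := by
      rw [← inner_sub_left, ← hd, real_inner_self_eq_norm_sq]
    have hne : μ ≠ 0 := ne_of_gt hμ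
    rw [h2, h3] at hdesc
    rw [h5] at hlow
    have : 1 / μ / 2 * (μ ^ 2 * ‖d‖ ^ 2) = μ / 2 * ‖d‖ ^ 2 := by field_simp
    rw [this] at hdesc
    nlinarith [h6]
  have k1 := key y w
  have k2 := key w y
  have e1 : ‖g w - g y‖ = ‖g y - g w‖ := norm_sub_rev _ _
  have e2 : ⟪g y, w - y⟫ = -⟪g y, y - w⟫ := by
    rw [show w - y = -(y - w) by abel, inner_neg_right]
  have e3 : ⟪g y - g w, y - w⟫ = ⟪g y, y - w⟫ - ⟪g w, y - w⟫ := inner_sub_left _ _ _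
  rw [e1] at k2
  rw [e2] at k2
  rw [e3]
  linarith

theorem stmt_1 (n : ℕ)
    (f : EuclideanSpace ℝ (Fin n) → ℝ) (f' : EuclideanSpace ℝ (Fin n) → EuclideanSpace ℝ (Fin n))
    (hf : ContDiff ℝ 2 f)
    (hf' : ∀ z, HasGradientAt f (f' z) z)
    (hf_lb : ∀ α : ℝ, Bornology.IsBounded {z | f z ≤ α})
    (φ : EuclideanSpace ℝ (Fin n) → EReal)
    (hφ_proper : ∃ z, φ z ≠ ⊤)
    (hφ_lsc : LowerSemicontinuous φ)
    (hφ_nonneg : ∀ z, 0 ≤ φ z)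
    (hφ_even : ∀ z, φ (-z) = φ z)
    (hφ_zero : φ 0 = 0)
    (hφ_es_dom : (interior {z | φ z ≠ ⊤}).Nonempty)
    (hφ_es_diff : DifferentiableOn ℝ (fun z => (φ z).toReal) (interior {z | φ z ≠ ⊤}))
    (hφ_es_blow : ∀ w ∈ frontier {z | φ z ≠ ⊤}, ∀ seq : ℕ → EuclideanSpace ℝ (Fin n),
      (∀ k, seq k ∈ interior {z | φ z ≠ ⊤}) → Tendsto seq atTop (𝓝 w) →
      Tendsto (fun k => ‖gradient (fun z => (φ z).toReal) (seq k)‖) atTop atTop)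
    (μφ : ℝ) (hμφ : 0 < μφ)
    (hφ_sconv : ∀ z w : EuclideanSpace ℝ (Fin n), ∀ t : ℝ, 0 ≤ t → t ≤ 1 →
      φ (t • z + (1 - t) • w) + ((μφ / 2 * (t * (1 - t)) * ‖z - w‖ ^ 2 : ℝ) : EReal)
        ≤ (t : EReal) * φ z + ((1 - t : ℝ) : EReal) * φ w)
    (φs : EuclideanSpace ℝ (Fin n) → ℝ)
    (hφs_conj : ∀ y, (φs y : EReal) = ⨆ z, (((⟪z, y⟫ : ℝ) : EReal) - φ z))
    (gφs : EuclideanSpace ℝ (Fin n) → EuclideanSpace ℝ (Fin n))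
    (hgφs : ∀ y, HasGradientAt φs (gφs y) y)
    (hg_lip : ∀ y w, ‖gφs y - gφs w‖ ≤ (1 / μφ) * ‖y - w‖)
    (hg_zero : gφs 0 = 0)
    (x₀ : EuclideanSpace ℝ (Fin n)) (x : ℝ → EuclideanSpace ℝ (Fin n))
    (hx_init : x 0 = x₀)
    (hode : ∀ t ∈ Ici (0:ℝ), HasDerivWithinAt x (-gφs (f' (x t))) (Ici 0) t)
    :
    IntegrableOn (fun s => ‖gφs (f' (x s))‖ ^ 2) (Ioi 0) volume ∧
      ∫ s in Ioi (0:ℝ), ‖gφs (f' (x s))‖ ^ 2 ≤ (f x₀ - ⨅ z, f z) / μφ := by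
  have hφbot : ∀ z, φ z ≠ ⊥ := by
    intro z h
    have h2 := hφ_nonneg z
    rw [h] at h2
    simp at h2
  have hterm_le : ∀ z y, (((⟪z, y⟫ : ℝ) : EReal) - φ z) ≤ (φs y : EReal) := by
    intro z y
    rw [hφs_conj y]
    exact le_iSup (fun z => (((⟪z, y⟫ : ℝ) : EReal) - φ z)) z
  have hconv : ConvexOn ℝ univ φs := by
    refine ⟨convex_univ, fun y₁ _ y₂ _ a b ha hb hab => ?_⟩
    simp only [smul_eq_mul]
    rw [← EReal.coe_le_coe_iff, hφs_conj]
    refine iSup_le fun z => ?_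
    by_cases hz : φ z = ⊤
    · rw [hz, EReal.sub_top]; exact bot_le
    · have hzz : φ z = ((φ z).toReal : EReal) := (EReal.coe_toReal hz (hφbot z)).symm
      set cz := (φ z).toReal
      have h1 : ⟪z, y₁⟫ - cz ≤ φs y₁ := by
        have h := hterm_le z y₁
        rw [hzz, ← EReal.coe_sub, EReal.coe_le_coe_iff] at h
        exact h
      have h2 : ⟪z, y₂⟫ - cz ≤ φs y₂ := by
        have h := hterm_le z y₂
        rw [hzz, ← EReal.coe_sub, EReal.coe_le_coe_iff] at h
        exact h
      rw [hzz, ← EReal.coe_sub, EReal.coe_le_coe_iff]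
      have hin : ⟪z, a • y₁ + b • y₂⟫ = a * ⟪z, y₁⟫ + b * ⟪z, y₂⟫ := by
        rw [inner_add_right, real_inner_smul_right, real_inner_smul_right]
      rw [hin]
      have e : a * cz + b * cz = cz := by rw [← add_mul, hab, one_mul]
      nlinarith [mul_le_mul_of_nonneg_left h1 ha, mul_le_mul_of_nonneg_left h2 hb]
  have hco : ∀ y, μφ * ‖gφs y‖ ^ 2 ≤ ⟪y, gφs y⟫ := by
    intro y
    have h := grad_cocoercive hconv hgφs hμφ hg_lip y 0
    simp only [hg_zero, sub_zero] at h
    rwa [real_inner_comm] at h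
  have hx_cont : ContinuousOn x (Ici 0) := fun t ht => (hode t ht).continuousWithinAt
  have hf'_cont : Continuous f' := by
    have h1 : Continuous (fderiv ℝ f) := hf.continuous_fderiv (by norm_num)
    have h2 : ∀ z, f' z = (InnerProductSpace.toDual ℝ _).symm (fderiv ℝ f z) := by
      intro z
      rw [(hf' z).hasFDerivAt.fderiv]
      exact ((InnerProductSpace.toDual ℝ _).symm_apply_apply _).symm
    rw [funext h2]
    exact ((InnerProductSpace.toDual ℝ _).symm.continuous).comp h1
  have hg_cont : Continuous gφs := by
    have h : LipschitzWith (Real.toNNReal (1 / μφ)) gφs := by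
      apply LipschitzWith.of_dist_le_mul
      intro a b
      rw [dist_eq_norm, dist_eq_norm, Real.coe_toNNReal _ (by positivity)]
      exact hg_lip a b
    exact h.continuous
  set G : ℝ → ℝ := fun s => ‖gφs (f' (x s))‖ ^ 2 with hG
  have hG_cont : ContinuousOn G (Ici 0) :=
    (((hg_cont.comp hf'_cont).comp_continuousOn hx_cont).norm).pow 2
  set Fd : ℝ → ℝ := fun s => ⟪f' (x s), -gφs (f' (x s))⟫ with hFd
  have hFd_cont : ContinuousOn Fd (Ici 0) := by
    apply ContinuousOn.inner
    · exact hf'_cont.comp_continuousOn hx_cont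
    · exact ((hg_cont.comp hf'_cont).comp_continuousOn hx_cont).neg
  have hS : IsCompact {z | f z ≤ f x₀} :=
    Metric.isCompact_of_isClosed_isBounded (isClosed_le hf.continuous continuous_const)
      (hf_lb _)
  have hx₀S : x₀ ∈ {z | f z ≤ f x₀} := by simp [Set.mem_setOf_eq]
  obtain ⟨zm, hzmS, hzm⟩ := hS.exists_isMinOn ⟨x₀, hx₀S⟩ hf.continuous.continuousOn
  have hzm' := isMinOn_iff.mp hzm
  have hlb : ∀ z, f zm ≤ f z := by
    intro z
    by_cases h : f z ≤ f x₀
    · exact hzm' z h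
    · exact le_trans (hzm' x₀ hx₀S) (not_le.mp h).le
  have hbdd : BddBelow (Set.range f) := ⟨f zm, by rintro _ ⟨z, rfl⟩; exact hlb z⟩
  have hinf_le : ∀ z, (⨅ w, f w) ≤ f z := fun z => ciInf_le hbdd z
  set C : ℝ := (f x₀ - ⨅ z, f z) / μφ with hC
  have hmain : ∀ T : ℝ, 0 ≤ T → ∫ s in (0:ℝ)..T, G s ≤ C := by
    intro T hT
    have hGint : IntervalIntegrable G volume 0 T := by
      apply ContinuousOn.intervalIntegrable
      rw [uIcc_of_le hT]
      exact hG_cont.mono Icc_subset_Ici_self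
    have hFdint : IntervalIntegrable Fd volume 0 T := by
      apply ContinuousOn.intervalIntegrable
      rw [uIcc_of_le hT]
      exact hFd_cont.mono Icc_subset_Ici_self
    have hFTC : ∫ s in (0:ℝ)..T, Fd s = f (x T) - f (x 0) := by
      apply intervalIntegral.integral_eq_sub_of_hasDeriv_right_of_le hT
      · exact hf.continuous.comp_continuousOn (hx_cont.mono Icc_subset_Ici_self)
      · intro s hs
        have hsub : Ioi s ⊆ Ici (0:ℝ) := fun a ha => le_of_lt (lt_trans hs.1 ha)
        have hder := (hode s hs.1.le).mono hsub
        have h := (hf' (x s)).hasFDerivAt.comp_hasDerivWithinAt s hder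
        simpa [hFd, InnerProductSpace.toDual_apply_apply, Function.comp_def] using h
      · exact hFdint
    rw [hx_init] at hFTC
    have hmono : ∫ s in (0:ℝ)..T, Fd s ≤ ∫ s in (0:ℝ)..T, (-(μφ * G s)) := by
      apply intervalIntegral.integral_mono_on hT hFdint ((hGint.const_mul μφ).neg)
      intro s _
      have h1 := hco (f' (x s))
      have h2 : Fd s = -⟪f' (x s), gφs (f' (x s))⟫ := by
        simp only [hFd, inner_neg_right]
      show Fd s ≤ -(μφ * ‖gφs (f' (x s))‖ ^ 2)
      rw [h2]
      linarith
    rw [intervalIntegral.integral_neg, intervalIntegral.integral_const_mul] at hmono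
    have hfT : (⨅ w, f w) ≤ f (x T) := hinf_le _
    rw [hC, le_div_iff₀ hμφ]
    linarith
  have hGnn : ∀ s, 0 ≤ G s := fun s => by simp only [hG]; positivity
  have hGint' : ∀ i : ℝ, IntegrableOn G (Ioc 0 i) volume := by
    intro i
    by_cases h : 0 ≤ i
    · exact ((hG_cont.mono Icc_subset_Ici_self).integrableOn_Icc).mono_set Ioc_subset_Icc_self
    · rw [Ioc_eq_empty (by simpa using fun h' : (0:ℝ) < i => h h'.le)]
      exact integrableOn_empty
  have hbound2 : ∀ᶠ i in (atTop : Filter ℝ), (∫ s in (0:ℝ)..i, ‖G s‖) ≤ C := by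
    filter_upwards [eventually_ge_atTop (0:ℝ)] with i hi
    have he : ∀ s, ‖G s‖ = G s := fun s => Real.norm_of_nonneg (hGnn s)
    calc (∫ s in (0:ℝ)..i, ‖G s‖) = ∫ s in (0:ℝ)..i, G s :=
          intervalIntegral.integral_congr (fun s _ => he s)
      _ ≤ C := hmain i hi
  have hint : IntegrableOn G (Ioi 0) volume :=
    integrableOn_Ioi_of_intervalIntegral_norm_bounded C 0 hGint' tendsto_id hbound2
  refine ⟨hint, ?_⟩
  have htend := intervalIntegral_tendsto_integral_Ioi 0 hint tendsto_id
  exact le_of_tendsto htend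
    (by filter_upwards [eventually_ge_atTop (0:ℝ)] with i hi using hmain i hi)
end
end

section
/- Let f additionally be convex, and let x : [0, ∞) → ℝⁿ be the unique global solution of ẋ(t) = −∇φ*(∇f(x(t))) with x(0) = x₀. Then t ↦ φ*(∇f(x(t))) is nonincreasing on [0, ∞); more precisely, (d/dt) φ*(∇f(x(t))) = −⟨ẋ(t), ∇²f(x(t)) ẋ(t)⟩ ≤ 0. -/
open MeasureTheory Filter Topology Set
open scoped RealInnerProductSpace

noncomputable section

lemma psd_of_convex_aux {n : ℕ} {f : EuclideanSpace ℝ (Fin n) → ℝ}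
    {f' : EuclideanSpace ℝ (Fin n) → EuclideanSpace ℝ (Fin n)}
    (hf' : ∀ z, HasGradientAt f (f' z) z)
    (hf_conv : ConvexOn ℝ Set.univ f)
    {f'' : EuclideanSpace ℝ (Fin n) → EuclideanSpace ℝ (Fin n) →L[ℝ] EuclideanSpace ℝ (Fin n)}
    (hf'' : ∀ z, HasFDerivAt f' (f'' z) z)
    (z g : EuclideanSpace ℝ (Fin n)) :
    0 ≤ ⟪g, f'' z g⟫ := by
  set c : ℝ → EuclideanSpace ℝ (Fin n) := fun t => z + t • g with hc_def
  have hc : ∀ t : ℝ, HasDerivAt c g t := by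
    intro t
    simpa [hc_def] using ((hasDerivAt_id t).smul_const g).const_add z
  set ψ : ℝ → ℝ := fun t => f (c t) with hψ_def
  set ψ' : ℝ → ℝ := fun t => ⟪f' (c t), g⟫ with hψ'_def
  have hψ : ∀ t : ℝ, HasDerivAt ψ (ψ' t) t := by
    intro t
    have := ((hf' (c t)).hasFDerivAt).comp_hasDerivAt t (hc t)
    exact this
  have hψconv : ConvexOn ℝ Set.univ ψ := by
    have h := hf_conv.comp_affineMap (AffineMap.lineMap z (z + g))
    have heq : ψ = f ∘ (AffineMap.lineMap z (z + g)) := by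
      funext t
      simp [hψ_def, hc_def, AffineMap.lineMap_apply, add_comm]
    rw [heq]
    simpa using h
  have hmono : Monotone ψ' := by
    have h := hψconv.monotoneOn_deriv (fun t _ => (hψ t).differentiableAt)
    have hde : ∀ t, deriv ψ t = ψ' t := fun t => (hψ t).deriv
    intro a b hab
    have := h (mem_univ a) (mem_univ b) hab
    rwa [hde, hde] at this
  have hd : HasDerivAt ψ' (⟪f'' z g, g⟫) 0 := by
    have h1 : HasDerivAt (fun t => f' (c t)) (f'' z g) 0 := by
      have := (hf'' (c 0)).comp_hasDerivAt 0 (hc 0)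
      simp only [hc_def, zero_smul, add_zero] at this
      exact this
    have h2 : HasDerivAt (fun _ : ℝ => g) 0 0 := hasDerivAt_const _ _
    have := h1.inner ℝ h2
    simpa [hψ'_def] using this
  have hds : Tendsto (slope ψ' 0) (𝓝[(Ioi (0:ℝ)) \ {0}] 0) (𝓝 ⟪f'' z g, g⟫) := by
    have := (hd.hasDerivWithinAt (s := Ioi (0:ℝ)))
    rwa [hasDerivWithinAt_iff_tendsto_slope] at this
  have hne : (𝓝[(Ioi (0:ℝ)) \ {0}] 0).NeBot := by
    rw [Set.diff_singleton_eq_self (by simp : (0:ℝ) ∉ Ioi 0)]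
    exact nhdsGT_neBot 0
  have hgs : 0 ≤ ⟪f'' z g, g⟫ := by
    refine ge_of_tendsto hds ?_
    filter_upwards [self_mem_nhdsWithin] with t ht
    rcases ht with ⟨ht1, _⟩
    have : ψ' 0 ≤ ψ' t := hmono (le_of_lt ht1)
    rw [slope_def_field]
    have : 0 ≤ ψ' t - ψ' 0 := by linarith
    have ht0 : (0:ℝ) < t - 0 := by simpa using ht1
    positivity
  rwa [real_inner_comm]


theorem stmt_6 (n : ℕ)
    (f : EuclideanSpace ℝ (Fin n) → ℝ) (f' : EuclideanSpace ℝ (Fin n) → EuclideanSpace ℝ (Fin n))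
    (hf : ContDiff ℝ 2 f)
    (hf' : ∀ z, HasGradientAt f (f' z) z)
    (hf_lb : ∀ α : ℝ, Bornology.IsBounded {z | f z ≤ α})
    (hf_conv : ConvexOn ℝ Set.univ f)
    (f'' : EuclideanSpace ℝ (Fin n) → EuclideanSpace ℝ (Fin n) →L[ℝ] EuclideanSpace ℝ (Fin n))
    (hf'' : ∀ z, HasFDerivAt f' (f'' z) z)
    (φ : EuclideanSpace ℝ (Fin n) → EReal)
    (hφ_proper : ∃ z, φ z ≠ ⊤)
    (hφ_lsc : LowerSemicontinuous φ)
    (hφ_nonneg : ∀ z, 0 ≤ φ z)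
    (hφ_even : ∀ z, φ (-z) = φ z)
    (hφ_zero : φ 0 = 0)
    (hφ_es_dom : (interior {z | φ z ≠ ⊤}).Nonempty)
    (hφ_es_diff : DifferentiableOn ℝ (fun z => (φ z).toReal) (interior {z | φ z ≠ ⊤}))
    (hφ_es_blow : ∀ w ∈ frontier {z | φ z ≠ ⊤}, ∀ seq : ℕ → EuclideanSpace ℝ (Fin n),
      (∀ k, seq k ∈ interior {z | φ z ≠ ⊤}) → Tendsto seq atTop (𝓝 w) →
      Tendsto (fun k => ‖gradient (fun z => (φ z).toReal) (seq k)‖) atTop atTop)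
    (μφ : ℝ) (hμφ : 0 < μφ)
    (hφ_sconv : ∀ z w : EuclideanSpace ℝ (Fin n), ∀ t : ℝ, 0 ≤ t → t ≤ 1 →
      φ (t • z + (1 - t) • w) + ((μφ / 2 * (t * (1 - t)) * ‖z - w‖ ^ 2 : ℝ) : EReal)
        ≤ (t : EReal) * φ z + ((1 - t : ℝ) : EReal) * φ w)
    (φs : EuclideanSpace ℝ (Fin n) → ℝ)
    (hφs_conj : ∀ y, (φs y : EReal) = ⨆ z, (((⟪z, y⟫ : ℝ) : EReal) - φ z))
    (gφs : EuclideanSpace ℝ (Fin n) → EuclideanSpace ℝ (Fin n))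
    (hgφs : ∀ y, HasGradientAt φs (gφs y) y)
    (hg_lip : ∀ y w, ‖gφs y - gφs w‖ ≤ (1 / μφ) * ‖y - w‖)
    (hg_zero : gφs 0 = 0)
    (x₀ : EuclideanSpace ℝ (Fin n)) (x : ℝ → EuclideanSpace ℝ (Fin n))
    (hx_init : x 0 = x₀)
    (hode : ∀ t ∈ Ici (0:ℝ), HasDerivWithinAt x (-gφs (f' (x t))) (Ici 0) t)
    :
    (∀ t ∈ Ici (0:ℝ),
        HasDerivWithinAt (fun s => φs (f' (x s)))
          (-⟪-gφs (f' (x t)), f'' (x t) (-gφs (f' (x t)))⟫) (Ici 0) t ∧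
          -⟪-gφs (f' (x t)), f'' (x t) (-gφs (f' (x t)))⟫ ≤ 0) ∧
      AntitoneOn (fun t => φs (f' (x t))) (Ici 0) := by
  have key : ∀ t ∈ Ici (0:ℝ),
      HasDerivWithinAt (fun s => φs (f' (x s)))
        (-⟪-gφs (f' (x t)), f'' (x t) (-gφs (f' (x t)))⟫) (Ici 0) t ∧
        -⟪-gφs (f' (x t)), f'' (x t) (-gφs (f' (x t)))⟫ ≤ 0 := by
    intro t ht
    set g := gφs (f' (x t)) with hg_def
    have h1 : HasDerivWithinAt x (-g) (Ici 0) t := hode t ht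
    have h2 : HasDerivWithinAt (fun s => f' (x s)) (f'' (x t) (-g)) (Ici 0) t :=
      (hf'' (x t)).comp_hasDerivWithinAt t h1
    have h3 : HasDerivWithinAt (fun s => φs (f' (x s))) (⟪g, f'' (x t) (-g)⟫) (Ici 0) t := by
      have := ((hgφs (f' (x t))).hasFDerivAt).comp_hasDerivWithinAt t h2
      exact this
    have heq : -⟪-g, f'' (x t) (-g)⟫ = ⟪g, f'' (x t) (-g)⟫ := by
      simp [inner_neg_left]
    have hpsd : 0 ≤ ⟪g, f'' (x t) g⟫ := psd_of_convex_aux hf' hf_conv hf'' (x t) g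
    constructor
    · rw [heq]; exact h3
    · rw [heq]
      have : ⟪g, f'' (x t) (-g)⟫ = -⟪g, f'' (x t) g⟫ := by
        simp [inner_neg_right]
      rw [this]
      linarith
  refine ⟨key, ?_⟩
  refine antitoneOn_of_hasDerivWithinAt_nonpos (convex_Ici 0)
    (fun t ht => ((key t ht).1).continuousWithinAt) (f' := fun t =>
      -⟪-gφs (f' (x t)), f'' (x t) (-gφs (f' (x t)))⟫) ?_ ?_
  · intro t ht
    rw [interior_Ici] at ht
    exact ((key t (Ioi_subset_Ici_self ht)).1).mono (by rw [interior_Ici]; exact Ioi_subset_Ici_self)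
  · intro t ht
    rw [interior_Ici] at ht
    exact (key t (Ioi_subset_Ici_self ht)).2
end
end

section
/- Let f additionally be convex, and let x : [0, ∞) → ℝⁿ be the unique global solution of ẋ(t) = −∇φ*(∇f(x(t))) with x(0) = x₀. Then the function V(t) := t · φ*(∇f(x(t))) + f(x(t)) is monotonically nonincreasing on [0, ∞). -/
open MeasureTheory Filter Topology Set
open scoped RealInnerProductSpace

noncomputable section

lemma grad_ineq {n : ℕ} {g : EuclideanSpace ℝ (Fin n) → ℝ}
    {g' : EuclideanSpace ℝ (Fin n) → EuclideanSpace ℝ (Fin n)}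
    (hconv : ConvexOn ℝ Set.univ g) (hg : ∀ z, HasGradientAt g (g' z) z)
    (y w : EuclideanSpace ℝ (Fin n)) : g y + ⟪g' y, w - y⟫ ≤ g w := by
  set v := w - y with hv
  have hcurve : ∀ s : ℝ, HasDerivAt (fun s : ℝ => y + s • v) v s := by
    intro s
    simpa using ((hasDerivAt_id s).smul_const v).const_add y
  have hψ : HasDerivAt (fun s : ℝ => g (y + s • v)) ⟪g' y, v⟫ 0 := by
    have h0 : HasDerivAt (fun s : ℝ => g (y + s • v))
        ((InnerProductSpace.toDual ℝ _ (g' (y + (0:ℝ) • v))) v) 0 :=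
      (hg (y + (0:ℝ) • v)).hasFDerivAt.comp_hasDerivAt 0 (hcurve 0)
    simpa using h0
  have hslope : Tendsto (slope (fun s : ℝ => g (y + s • v)) 0) (𝓝[>] 0) (𝓝 ⟪g' y, v⟫) :=
    (hasDerivAt_iff_tendsto_slope.mp hψ).mono_left
      (nhdsWithin_mono _ (fun s hs => ne_of_gt hs))
  have hbound : ∀ᶠ s in 𝓝[>] (0:ℝ), slope (fun s : ℝ => g (y + s • v)) 0 s ≤ g w - g y := by
    filter_upwards [Ioc_mem_nhdsGT_of_mem ⟨le_refl (0:ℝ), one_pos⟩] with s hs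
    obtain ⟨hs0, hs1⟩ := hs
    have hgs : g (y + s • v) ≤ (1 - s) * g y + s * g w := by
      have heq : y + s • v = (1 - s) • y + s • w := by
        rw [hv]; module
      rw [heq]
      exact hconv.2 (mem_univ y) (mem_univ w) (by linarith) hs0.le (by ring)
    have : slope (fun s : ℝ => g (y + s • v)) 0 s = (g (y + s • v) - g y) / s := by
      rw [slope_def_field]; simp
    rw [this, div_le_iff₀ hs0]
    nlinarith
  have hfin : ⟪g' y, v⟫ ≤ g w - g y := le_of_tendsto hslope hbound
  linarith

lemma hess_nonneg {n : ℕ} {g : EuclideanSpace ℝ (Fin n) → ℝ}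
    {g' : EuclideanSpace ℝ (Fin n) → EuclideanSpace ℝ (Fin n)}
    (hconv : ConvexOn ℝ Set.univ g) (hg : ∀ z, HasGradientAt g (g' z) z)
    (hdiff : Differentiable ℝ g') (p v : EuclideanSpace ℝ (Fin n)) :
    0 ≤ ⟪v, fderiv ℝ g' p v⟫ := by
  have hmono : ∀ a b, 0 ≤ ⟪g' a - g' b, a - b⟫ := by
    intro a b
    have h1 := grad_ineq hconv hg a b
    have h2 := grad_ineq hconv hg b a
    have e1 : ⟪g' a - g' b, a - b⟫ = ⟪g' a, a - b⟫ - ⟪g' b, a - b⟫ := inner_sub_left _ _ _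
    have e2 : ⟪g' a, b - a⟫ = -⟪g' a, a - b⟫ := by
      rw [← inner_neg_right]; congr 1; abel
    have e3 : ⟪g' b, a - b⟫ = -⟪g' b, b - a⟫ := by
      rw [← inner_neg_right]; congr 1; abel
    linarith [h1, h2]
  have hcurve : ∀ s : ℝ, HasDerivAt (fun s : ℝ => p + s • v) v s := by
    intro s
    simpa using ((hasDerivAt_id s).smul_const v).const_add p
  have hy : HasDerivAt (fun s : ℝ => g' (p + s • v)) (fderiv ℝ g' p v) 0 := by
    have h0 := (hdiff (p + (0:ℝ) • v)).hasFDerivAt.comp_hasDerivAt 0 (hcurve 0)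
    simpa [Function.comp_def] using h0
  have hψ : HasDerivAt (fun s : ℝ => ⟪v, g' (p + s • v)⟫) ⟪v, fderiv ℝ g' p v⟫ 0 :=
    by simpa using (hasDerivAt_const (0:ℝ) v).inner ℝ hy
  have hslope : Tendsto (slope (fun s : ℝ => ⟪v, g' (p + s • v)⟫) 0) (𝓝[>] 0)
      (𝓝 ⟪v, fderiv ℝ g' p v⟫) :=
    (hasDerivAt_iff_tendsto_slope.mp hψ).mono_left
      (nhdsWithin_mono _ (fun s hs => ne_of_gt hs))
  refine ge_of_tendsto hslope ?_
  filter_upwards [self_mem_nhdsWithin] with s hs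
  have hs0 : (0:ℝ) < s := hs
  have key := hmono (p + s • v) p
  have e : p + s • v - p = s • v := by abel
  rw [e, inner_smul_right] at key
  have hinner : 0 ≤ ⟪g' (p + s • v) - g' p, v⟫ := nonneg_of_mul_nonneg_right key hs0
  have hsl : slope (fun s : ℝ => ⟪v, g' (p + s • v)⟫) 0 s
      = (⟪v, g' (p + s • v)⟫ - ⟪v, g' p⟫) / s := by
    rw [slope_def_field]; simp
  rw [hsl]
  apply div_nonneg _ hs0.le
  have : ⟪v, g' (p + s • v)⟫ - ⟪v, g' p⟫ = ⟪g' (p + s • v) - g' p, v⟫ := by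
    rw [inner_sub_left, real_inner_comm, real_inner_comm (g' p)]
  linarith [hinner, this]

theorem stmt_7 (n : ℕ)
    (f : EuclideanSpace ℝ (Fin n) → ℝ) (f' : EuclideanSpace ℝ (Fin n) → EuclideanSpace ℝ (Fin n))
    (hf : ContDiff ℝ 2 f)
    (hf' : ∀ z, HasGradientAt f (f' z) z)
    (hf_lb : ∀ α : ℝ, Bornology.IsBounded {z | f z ≤ α})
    (hf_conv : ConvexOn ℝ Set.univ f)
    (φ : EuclideanSpace ℝ (Fin n) → EReal)
    (hφ_proper : ∃ z, φ z ≠ ⊤)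
    (hφ_lsc : LowerSemicontinuous φ)
    (hφ_nonneg : ∀ z, 0 ≤ φ z)
    (hφ_even : ∀ z, φ (-z) = φ z)
    (hφ_zero : φ 0 = 0)
    (hφ_es_dom : (interior {z | φ z ≠ ⊤}).Nonempty)
    (hφ_es_diff : DifferentiableOn ℝ (fun z => (φ z).toReal) (interior {z | φ z ≠ ⊤}))
    (hφ_es_blow : ∀ w ∈ frontier {z | φ z ≠ ⊤}, ∀ seq : ℕ → EuclideanSpace ℝ (Fin n),
      (∀ k, seq k ∈ interior {z | φ z ≠ ⊤}) → Tendsto seq atTop (𝓝 w) →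
      Tendsto (fun k => ‖gradient (fun z => (φ z).toReal) (seq k)‖) atTop atTop)
    (μφ : ℝ) (hμφ : 0 < μφ)
    (hφ_sconv : ∀ z w : EuclideanSpace ℝ (Fin n), ∀ t : ℝ, 0 ≤ t → t ≤ 1 →
      φ (t • z + (1 - t) • w) + ((μφ / 2 * (t * (1 - t)) * ‖z - w‖ ^ 2 : ℝ) : EReal)
        ≤ (t : EReal) * φ z + ((1 - t : ℝ) : EReal) * φ w)
    (φs : EuclideanSpace ℝ (Fin n) → ℝ)
    (hφs_conj : ∀ y, (φs y : EReal) = ⨆ z, (((⟪z, y⟫ : ℝ) : EReal) - φ z))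
    (gφs : EuclideanSpace ℝ (Fin n) → EuclideanSpace ℝ (Fin n))
    (hgφs : ∀ y, HasGradientAt φs (gφs y) y)
    (hg_lip : ∀ y w, ‖gφs y - gφs w‖ ≤ (1 / μφ) * ‖y - w‖)
    (hg_zero : gφs 0 = 0)
    (x₀ : EuclideanSpace ℝ (Fin n)) (x : ℝ → EuclideanSpace ℝ (Fin n))
    (hx_init : x 0 = x₀)
    (hode : ∀ t ∈ Ici (0:ℝ), HasDerivWithinAt x (-gφs (f' (x t))) (Ici 0) t)
    :
    AntitoneOn (fun t => t * φs (f' (x t)) + f (x t)) (Ici 0) := by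
  -- φ never takes the value ⊥
  have hbot : ∀ z, φ z ≠ ⊥ := fun z =>
    ne_of_gt (lt_of_lt_of_le (by simp : (⊥ : EReal) < 0) (hφ_nonneg z))
  -- each Fenchel term is below φs
  have hterm : ∀ z y, (((⟪z, y⟫ : ℝ) : EReal) - φ z) ≤ (φs y : EReal) := by
    intro z y
    have := le_iSup (fun z => (((⟪z, y⟫ : ℝ) : EReal) - φ z)) z
    rwa [← hφs_conj y] at this
  have hterm_real : ∀ z y, φ z ≠ ⊤ → ⟪z, y⟫ - (φ z).toReal ≤ φs y := by
    intro z y hz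
    have h : ((⟪z, y⟫ - (φ z).toReal : ℝ) : EReal) ≤ (φs y : EReal) := by
      rw [EReal.coe_sub, EReal.coe_toReal hz (hbot z)]
      exact hterm z y
    exact_mod_cast h
  -- φs 0 = 0
  have hφs0 : φs 0 = 0 := by
    have h0 : (φs (0 : EuclideanSpace ℝ (Fin n)) : EReal) = 0 := by
      rw [hφs_conj]
      apply le_antisymm
      · apply iSup_le
        intro z
        by_cases hz : φ z = ⊤
        · rw [hz, EReal.sub_top]; exact bot_le
        · rw [← EReal.coe_toReal hz (hbot z)]
          have hzz : (⟪z, (0 : EuclideanSpace ℝ (Fin n))⟫ : ℝ) = 0 := inner_zero_right z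
          rw [hzz, ← EReal.coe_sub, ← EReal.coe_zero, EReal.coe_le_coe_iff]
          have hnn : (0:ℝ) ≤ (φ z).toReal := by
            have h := hφ_nonneg z
            rw [← EReal.coe_toReal hz (hbot z)] at h
            exact_mod_cast h
          linarith
      · have h := le_iSup
          (fun z => (((⟪z, (0 : EuclideanSpace ℝ (Fin n))⟫ : ℝ) : EReal) - φ z))
          (0 : EuclideanSpace ℝ (Fin n))
        simpa [hφ_zero] using h
    exact_mod_cast h0
  -- φs is convex
  have hφs_conv : ConvexOn ℝ Set.univ φs := by
    refine ⟨convex_univ, ?_⟩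
    intro a _ b _ ta tb hta htb hab
    rw [← EReal.coe_le_coe_iff, hφs_conj]
    apply iSup_le
    intro z
    by_cases hz : φ z = ⊤
    · rw [hz, EReal.sub_top]; exact bot_le
    · rw [← EReal.coe_toReal hz (hbot z), ← EReal.coe_sub, EReal.coe_le_coe_iff]
      have h1 := hterm_real z a hz
      have h2 := hterm_real z b hz
      have hin : (⟪z, ta • a + tb • b⟫ : ℝ) = ta * ⟪z, a⟫ + tb * ⟪z, b⟫ := by
        rw [inner_add_right, real_inner_smul_right, real_inner_smul_right]
      rw [hin]
      have e1 := mul_le_mul_of_nonneg_left h1 hta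
      have e2 := mul_le_mul_of_nonneg_left h2 htb
      have hsum : ta * (⟪z, a⟫ - (φ z).toReal) + tb * (⟪z, b⟫ - (φ z).toReal)
          = ta * ⟪z, a⟫ + tb * ⟪z, b⟫ - (ta + tb) * (φ z).toReal := by ring
      rw [hab, one_mul] at hsum
      simp only [smul_eq_mul]
      linarith [e1, e2, hsum]
  -- f' is differentiable
  have hfd : ∀ z, fderiv ℝ f z = InnerProductSpace.toDual ℝ _ (f' z) :=
    fun z => (hf' z).hasFDerivAt.fderiv
  have hf'eq : f' = fun z => (InnerProductSpace.toDual ℝ _).symm (fderiv ℝ f z) := by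
    funext z; rw [hfd z]; simp
  have hdiff : Differentiable ℝ f' := by
    rw [hf'eq]
    have hd : Differentiable ℝ (fderiv ℝ f) :=
      (hf.fderiv_right (by norm_num : (1 : WithTop ℕ∞) + 1 ≤ 2)).differentiable one_ne_zero
    exact ((InnerProductSpace.toDual ℝ _).symm.toContinuousLinearEquiv
      |>.differentiable).comp hd
  -- the derivative of V along Ici 0
  have hVd : ∀ t ∈ Ici (0:ℝ), HasDerivWithinAt (fun t => t * φs (f' (x t)) + f (x t))
      (φs (f' (x t)) + t * ⟪gφs (f' (x t)), fderiv ℝ f' (x t) (-gφs (f' (x t)))⟫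
        + ⟪f' (x t), -gφs (f' (x t))⟫) (Ici 0) t := by
    intro t ht
    have hx' := hode t ht
    have hy' : HasDerivWithinAt (fun s => f' (x s))
        (fderiv ℝ f' (x t) (-gφs (f' (x t)))) (Ici 0) t :=
      (hdiff (x t)).hasFDerivAt.comp_hasDerivWithinAt t hx'
    have hφs' : HasDerivWithinAt (fun s => φs (f' (x s)))
        ⟪gφs (f' (x t)), fderiv ℝ f' (x t) (-gφs (f' (x t)))⟫ (Ici 0) t := by
      have := (hgφs (f' (x t))).hasFDerivAt.comp_hasDerivWithinAt t hy'
      simpa [InnerProductSpace.toDual_apply_apply, Function.comp_def] using this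
    have hprod := (hasDerivWithinAt_id t (Ici 0)).mul hφs'
    have hfx : HasDerivWithinAt (fun s => f (x s)) ⟪f' (x t), -gφs (f' (x t))⟫ (Ici 0) t := by
      have := (hf' (x t)).hasFDerivAt.comp_hasDerivWithinAt t hx'
      simpa [InnerProductSpace.toDual_apply_apply, Function.comp_def] using this
    have := hprod.add hfx
    simpa [one_mul, add_assoc, mul_comm, Pi.add_def, Pi.mul_def] using this
  -- the derivative is nonpositive
  have hVle : ∀ t ∈ Ici (0:ℝ),
      φs (f' (x t)) + t * ⟪gφs (f' (x t)), fderiv ℝ f' (x t) (-gφs (f' (x t)))⟫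
        + ⟪f' (x t), -gφs (f' (x t))⟫ ≤ 0 := by
    intro t ht
    set y := f' (x t) with hy
    set g := gφs y with hg
    -- first-order bound: φs y ≤ ⟪y, g⟫
    have h1 : φs y ≤ ⟪y, g⟫ := by
      have := grad_ineq hφs_conv hgφs y 0
      rw [hφs0] at this
      have e : ⟪g, (0 : EuclideanSpace ℝ (Fin n)) - y⟫ = -⟪g, y⟫ := by
        rw [zero_sub, inner_neg_right]
      rw [e] at this
      rw [real_inner_comm]
      linarith
    -- Hessian term
    have h2 : 0 ≤ ⟪g, fderiv ℝ f' (x t) g⟫ := hess_nonneg hf_conv hf' hdiff (x t) g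
    have e2 : ⟪g, fderiv ℝ f' (x t) (-g)⟫ = -⟪g, fderiv ℝ f' (x t) g⟫ := by
      rw [map_neg, inner_neg_right]
    have e3 : ⟪y, -g⟫ = -⟪y, g⟫ := inner_neg_right _ _
    rw [e2, e3]
    have ht0 : (0:ℝ) ≤ t := ht
    nlinarith [mul_nonneg ht0 h2]
  -- conclude
  refine antitoneOn_of_deriv_nonpos (convex_Ici 0) ?_ ?_ ?_
  · exact fun t ht => (hVd t ht).continuousWithinAt
  · intro t ht
    rw [interior_Ici] at ht
    exact ((hVd t (mem_Ici.mpr (le_of_lt (mem_Ioi.mp ht)))).hasDerivAt (Ici_mem_nhds ht)).differentiableAt.differentiableWithinAt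
  · intro t ht
    rw [interior_Ici] at ht
    rw [((hVd t (mem_Ici.mpr (le_of_lt (mem_Ioi.mp ht)))).hasDerivAt (Ici_mem_nhds ht)).deriv]
    exact hVle t (mem_Ici.mpr (le_of_lt (mem_Ioi.mp ht)))
end
end

section
/- Let f additionally be convex, and let x : [0, ∞) → ℝⁿ be the unique global solution of ẋ(t) = −∇φ*(∇f(x(t))) with x(0) = x₀. Then for every t > 0, φ*(∇f(x(t))) ≤ (f(x₀) − f⋆)/t. -/
open MeasureTheory Filter Topology Set
open scoped RealInnerProductSpace
noncomputable section

variable {E : Type*} [NormedAddCommGroup E] [InnerProductSpace ℝ E] [CompleteSpace E]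

lemma aux_grad_ineq {g : E → ℝ} {a b ga : E}
    (hga : HasGradientAt g ga a)
    (hseg : ∀ t : ℝ, 0 < t → t ≤ 1 → g (a + t • (b - a)) ≤ (1 - t) * g a + t * g b) :
    g a + ⟪ga, b - a⟫ ≤ g b := by
  set c : ℝ → E := fun t => a + t • (b - a) with hc
  have hcd : HasDerivAt c (b - a) 0 := by
    simpa [hc] using ((hasDerivAt_id (0:ℝ)).smul_const (b - a)).const_add a
  have hF : HasFDerivAt g ((InnerProductSpace.toDual ℝ E) ga) (c 0) := by
    simpa [hc] using hga.hasFDerivAt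
  have hgc : HasDerivAt (fun t => g (c t)) ⟪ga, b - a⟫ 0 := by
    simpa [InnerProductSpace.toDual_apply_apply, Function.comp_def] using hF.comp_hasDerivAt (0:ℝ) hcd
  have hslope := hasDerivAt_iff_tendsto_slope.mp hgc
  have hmono : Tendsto (slope (fun t => g (c t)) 0) (𝓝[>] 0) (𝓝 ⟪ga, b - a⟫) :=
    hslope.mono_left (nhdsWithin_mono 0 (fun x hx => ne_of_gt hx))
  have hb : ⟪ga, b - a⟫ ≤ g b - g a := by
    refine le_of_tendsto hmono ?_
    filter_upwards [Ioc_mem_nhdsGT_of_mem (by constructor <;> norm_num : (0:ℝ) ∈ Ico 0 1)]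
      with t ht
    have h1 := hseg t ht.1 ht.2
    have hcz : c 0 = a := by simp [hc]
    have hsl : slope (fun t => g (c t)) 0 t = (g (c t) - g a) / t := by
      rw [slope_def_field]; rw [hcz]; ring_nf
    rw [hsl, div_le_iff₀ ht.1]
    nlinarith [h1]
  linarith [hb]

lemma aux_mono_grad {g : E → ℝ} {g' : E → E}
    (hg' : ∀ z, HasGradientAt g (g' z) z) (hconv : ConvexOn ℝ Set.univ g) (a b : E) :
    0 ≤ ⟪g' a - g' b, a - b⟫ := by
  have hseg : ∀ (u v : E), ∀ t : ℝ, 0 < t → t ≤ 1 →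
      g (u + t • (v - u)) ≤ (1 - t) * g u + t * g v := by
    intro u v t ht0 ht1
    have := hconv.2 (mem_univ u) (mem_univ v) (by linarith : (0:ℝ) ≤ 1 - t) ht0.le
      (by ring : (1 - t) + t = 1)
    have hpt : (1 - t) • u + t • v = u + t • (v - u) := by
      rw [smul_sub, sub_smul, one_smul]; abel
    rw [hpt] at this
    exact this
  have h1 : g a + ⟪g' a, b - a⟫ ≤ g b := aux_grad_ineq (hg' a) (hseg a b)
  have h2 : g b + ⟪g' b, a - b⟫ ≤ g a := aux_grad_ineq (hg' b) (hseg b a)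
  have e1 : ⟪g' a - g' b, a - b⟫ = ⟪g' b, b - a⟫ - ⟪g' a, b - a⟫ := by
    rw [inner_sub_left]
    have : (a - b : E) = -(b - a) := by abel
    rw [this, inner_neg_right, inner_neg_right]
    ring
  have e2 : ⟪g' b, a - b⟫ = -⟪g' b, b - a⟫ := by
    have : (a - b : E) = -(b - a) := by abel
    rw [this, inner_neg_right]
  rw [e2] at h2
  rw [e1]
  linarith

lemma aux_psd {g : E → ℝ} {g' : E → E}
    (hg' : ∀ z, HasGradientAt g (g' z) z) (hconv : ConvexOn ℝ Set.univ g)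
    (hg'd : Differentiable ℝ g') (p v : E) :
    0 ≤ ⟪v, fderiv ℝ g' p v⟫ := by
  set c : ℝ → E := fun τ => p + τ • v with hc
  have hcd : HasDerivAt c v 0 := by
    simpa [hc] using ((hasDerivAt_id (0:ℝ)).smul_const v).const_add p
  have hy : HasDerivAt (fun τ => g' (c τ)) (fderiv ℝ g' p v) 0 := by
    have hF : HasFDerivAt g' (fderiv ℝ g' p) (c 0) := by
      simpa [hc] using (hg'd p).hasFDerivAt
    exact hF.comp_hasDerivAt (0:ℝ) hcd
  set m : ℝ → ℝ := fun τ => ⟪v, g' (c τ)⟫ - ⟪v, g' p⟫ with hm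
  have hmd : HasDerivAt m ⟪v, fderiv ℝ g' p v⟫ 0 := by
    have := ((innerSL ℝ v).hasFDerivAt.comp_hasDerivAt (0:ℝ) hy).sub_const (⟪v, g' p⟫ : ℝ)
    simpa [hm] using this
  have hslope := hasDerivAt_iff_tendsto_slope.mp hmd
  have hmono : Tendsto (slope m 0) (𝓝[>] 0) (𝓝 ⟪v, fderiv ℝ g' p v⟫) :=
    hslope.mono_left (nhdsWithin_mono 0 (fun x hx => ne_of_gt hx))
  refine ge_of_tendsto hmono ?_
  filter_upwards [self_mem_nhdsWithin] with τ (hτ : 0 < τ)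
  have hmg := aux_mono_grad hg' hconv (c τ) p
  have hdiff : (c τ - p : E) = τ • v := by simp [hc]
  rw [hdiff, real_inner_smul_right] at hmg
  have hterm : 0 ≤ ⟪g' (c τ) - g' p, v⟫ := nonneg_of_mul_nonneg_right hmg hτ
  have hm0 : m 0 = 0 := by simp [hm, hc]
  have hsl : slope m 0 τ = m τ / τ := by rw [slope_def_field, hm0]; ring_nf
  rw [hsl]
  apply div_nonneg _ hτ.le
  have : m τ = ⟪g' (c τ) - g' p, v⟫ := by
    rw [inner_sub_left, hm]
    rw [real_inner_comm v (g' (c τ)), real_inner_comm v (g' p)]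
  rw [this]; exact hterm

lemma aux_phis_zero {φ : E → EReal} {φs : E → ℝ}
    (hφ_nonneg : ∀ z, 0 ≤ φ z) (hφ_zero : φ 0 = 0)
    (hφs_conj : ∀ y, (φs y : EReal) = ⨆ z, (((⟪z, y⟫ : ℝ) : EReal) - φ z)) :
    φs 0 = 0 := by
  have h : (φs 0 : EReal) = 0 := by
    rw [hφs_conj 0]
    apply le_antisymm
    · apply iSup_le
      intro z
      have : ((⟪z, (0:E)⟫ : ℝ) : EReal) = 0 := by simp
      rw [this, zero_sub]
      rw [show (0:EReal) = -0 by simp, EReal.neg_le_neg_iff]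
      exact hφ_nonneg z
    · have := le_iSup (fun z => (((⟪z, (0:E)⟫ : ℝ) : EReal) - φ z)) (0 : E)
      simpa [hφ_zero] using this
  exact_mod_cast h

lemma aux_phis_seg {φ : E → EReal} {φs : E → ℝ}
    (hφ_nonneg : ∀ z, 0 ≤ φ z)
    (hφs_conj : ∀ y, (φs y : EReal) = ⨆ z, (((⟪z, y⟫ : ℝ) : EReal) - φ z))
    (y : E) (t : ℝ) (ht0 : 0 ≤ t) (ht1 : t ≤ 1) :
    φs ((1 - t) • y) ≤ (1 - t) * φs y := by
  have key : (φs ((1 - t) • y) : EReal) ≤ (((1 - t) * φs y : ℝ) : EReal) := by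
    rw [hφs_conj ((1 - t) • y)]
    apply iSup_le
    intro z
    have hip : (⟪z, (1 - t) • y⟫ : ℝ) = (1 - t) * ⟪z, y⟫ := real_inner_smul_right z y (1 - t)
    rw [hip]
    by_cases htop : φ z = ⊤
    · rw [htop]
      rw [EReal.sub_top]
      exact bot_le
    · have hbot : φ z ≠ ⊥ := ne_of_gt (lt_of_lt_of_le EReal.bot_lt_zero (hφ_nonneg z))
      set cz : ℝ := (φ z).toReal with hcz
      have hφz : φ z = (cz : EReal) := (EReal.coe_toReal htop hbot).symm
      have hcnn : 0 ≤ cz := by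
        have := hφ_nonneg z
        rw [hφz] at this
        exact_mod_cast this
      have hzle : (⟪z, y⟫ : ℝ) - cz ≤ φs y := by
        have h1 : (((⟪z, y⟫ : ℝ) : EReal) - φ z) ≤ (φs y : EReal) := by
          rw [hφs_conj y]
          exact le_iSup (fun z => (((⟪z, y⟫ : ℝ) : EReal) - φ z)) z
        rw [hφz, ← EReal.coe_sub] at h1
        exact_mod_cast h1
      rw [hφz, ← EReal.coe_sub, EReal.coe_le_coe_iff]
      nlinarith [hzle, hcnn]
  exact_mod_cast key

lemma aux_phis_le {φ : E → EReal} {φs : E → ℝ} {gφs : E → E}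
    (hφ_nonneg : ∀ z, 0 ≤ φ z) (hφ_zero : φ 0 = 0)
    (hφs_conj : ∀ y, (φs y : EReal) = ⨆ z, (((⟪z, y⟫ : ℝ) : EReal) - φ z))
    (hgφs : ∀ y, HasGradientAt φs (gφs y) y) (y : E) :
    φs y ≤ ⟪gφs y, y⟫ := by
  have h0 : φs 0 = 0 := aux_phis_zero hφ_nonneg hφ_zero hφs_conj
  have hseg : ∀ t : ℝ, 0 < t → t ≤ 1 →
      φs (y + t • ((0:E) - y)) ≤ (1 - t) * φs y + t * φs 0 := by
    intro t ht0 ht1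
    have hpt : (y + t • ((0:E) - y)) = (1 - t) • y := by
      rw [sub_smul, one_smul, smul_sub, smul_zero]; abel
    rw [hpt, h0, mul_zero, add_zero]
    exact aux_phis_seg hφ_nonneg hφs_conj y t ht0.le ht1
  have := aux_grad_ineq (hgφs y) hseg
  rw [h0, zero_sub, inner_neg_right] at this
  linarith
theorem stmt_8 (n : ℕ)
    (f : EuclideanSpace ℝ (Fin n) → ℝ) (f' : EuclideanSpace ℝ (Fin n) → EuclideanSpace ℝ (Fin n))
    (hf : ContDiff ℝ 2 f)
    (hf' : ∀ z, HasGradientAt f (f' z) z)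
    (hf_lb : ∀ α : ℝ, Bornology.IsBounded {z | f z ≤ α})
    (hf_conv : ConvexOn ℝ Set.univ f)
    (φ : EuclideanSpace ℝ (Fin n) → EReal)
    (hφ_proper : ∃ z, φ z ≠ ⊤)
    (hφ_lsc : LowerSemicontinuous φ)
    (hφ_nonneg : ∀ z, 0 ≤ φ z)
    (hφ_even : ∀ z, φ (-z) = φ z)
    (hφ_zero : φ 0 = 0)
    (hφ_es_dom : (interior {z | φ z ≠ ⊤}).Nonempty)
    (hφ_es_diff : DifferentiableOn ℝ (fun z => (φ z).toReal) (interior {z | φ z ≠ ⊤}))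
    (hφ_es_blow : ∀ w ∈ frontier {z | φ z ≠ ⊤}, ∀ seq : ℕ → EuclideanSpace ℝ (Fin n),
      (∀ k, seq k ∈ interior {z | φ z ≠ ⊤}) → Tendsto seq atTop (𝓝 w) →
      Tendsto (fun k => ‖gradient (fun z => (φ z).toReal) (seq k)‖) atTop atTop)
    (μφ : ℝ) (hμφ : 0 < μφ)
    (hφ_sconv : ∀ z w : EuclideanSpace ℝ (Fin n), ∀ t : ℝ, 0 ≤ t → t ≤ 1 →
      φ (t • z + (1 - t) • w) + ((μφ / 2 * (t * (1 - t)) * ‖z - w‖ ^ 2 : ℝ) : EReal)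
        ≤ (t : EReal) * φ z + ((1 - t : ℝ) : EReal) * φ w)
    (φs : EuclideanSpace ℝ (Fin n) → ℝ)
    (hφs_conj : ∀ y, (φs y : EReal) = ⨆ z, (((⟪z, y⟫ : ℝ) : EReal) - φ z))
    (gφs : EuclideanSpace ℝ (Fin n) → EuclideanSpace ℝ (Fin n))
    (hgφs : ∀ y, HasGradientAt φs (gφs y) y)
    (hg_lip : ∀ y w, ‖gφs y - gφs w‖ ≤ (1 / μφ) * ‖y - w‖)
    (hg_zero : gφs 0 = 0)
    (x₀ : EuclideanSpace ℝ (Fin n)) (x : ℝ → EuclideanSpace ℝ (Fin n))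
    (hx_init : x 0 = x₀)
    (hode : ∀ t ∈ Ici (0:ℝ), HasDerivWithinAt x (-gφs (f' (x t))) (Ici 0) t)
    :
    ∀ t : ℝ, 0 < t → φs (f' (x t)) ≤ (f x₀ - ⨅ z, f z) / t := by
  intro t ht
  -- differentiability of f'
  have hfd2 : ContDiff ℝ 1 (fderiv ℝ f) := hf.fderiv_right (by norm_num)
  have hf'_eq : f' = fun z =>
      (InnerProductSpace.toDual ℝ (EuclideanSpace ℝ (Fin n))).symm (fderiv ℝ f z) := by
    funext z
    rw [(hf' z).hasFDerivAt.fderiv]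
    simp
  have hf'_diff : Differentiable ℝ f' := by
    rw [hf'_eq]
    exact (LinearIsometryEquiv.differentiable _).comp
      (hfd2.differentiable one_ne_zero)
  have hkey : ∀ y, φs y ≤ ⟪gφs y, y⟫ := aux_phis_le hφ_nonneg hφ_zero hφs_conj hgφs
  have hpsd : ∀ p v : EuclideanSpace ℝ (Fin n), 0 ≤ ⟪v, fderiv ℝ f' p v⟫ :=
    aux_psd hf' hf_conv hf'_diff
  -- derivative of s ↦ φs (f' (x s))
  have hGd : ∀ s ∈ Ici (0:ℝ), HasDerivWithinAt (fun s => φs (f' (x s)))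
      (⟪gφs (f' (x s)), fderiv ℝ f' (x s) (-gφs (f' (x s)))⟫) (Ici 0) s := by
    intro s hs
    have hy : HasDerivWithinAt (fun s => f' (x s))
        (fderiv ℝ f' (x s) (-gφs (f' (x s)))) (Ici 0) s :=
      (hf'_diff (x s)).hasFDerivAt.comp_hasDerivWithinAt s (hode s hs)
    have hφF : HasFDerivAt φs
        ((InnerProductSpace.toDual ℝ (EuclideanSpace ℝ (Fin n))) (gφs (f' (x s))))
        (f' (x s)) := (hgφs _).hasFDerivAt
    simpa [InnerProductSpace.toDual_apply_apply, Function.comp_def] using hφF.comp_hasDerivWithinAt s hy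
  have hGd_nonpos : ∀ s : ℝ,
      (⟪gφs (f' (x s)), fderiv ℝ f' (x s) (-gφs (f' (x s)))⟫ : ℝ) ≤ 0 := by
    intro s
    rw [map_neg, inner_neg_right]
    exact neg_nonpos.mpr (hpsd _ _)
  have hG_anti : AntitoneOn (fun s => φs (f' (x s))) (Ici 0) := by
    refine antitoneOn_of_hasDerivWithinAt_nonpos (convex_Ici (0:ℝ))
      (fun s hs => (hGd s hs).continuousWithinAt)
      (f' := fun s => ⟪gφs (f' (x s)), fderiv ℝ f' (x s) (-gφs (f' (x s)))⟫) ?_ ?_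
    · intro s hs
      rw [interior_Ici] at hs ⊢
      exact (hGd s (Set.mem_Ici.mpr (le_of_lt (Set.mem_Ioi.mp hs)))).mono Ioi_subset_Ici_self
    · intro s _
      exact hGd_nonpos s
  set c : ℝ := φs (f' (x t)) with hc
  have hGt : ∀ s ∈ Icc (0:ℝ) t, c ≤ φs (f' (x s)) := by
    intro s hs
    exact hG_anti hs.1 (le_of_lt ht) hs.2
  -- energy function
  have hHd : ∀ s ∈ Icc (0:ℝ) t, HasDerivWithinAt (fun s => f (x s) + s * c)
      (⟪f' (x s), -gφs (f' (x s))⟫ + c) (Icc 0 t) s := by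
    intro s hs
    have hF : HasDerivWithinAt (fun s => f (x s)) (⟪f' (x s), -gφs (f' (x s))⟫) (Icc 0 t) s := by
      have hφF : HasFDerivAt f
          ((InnerProductSpace.toDual ℝ (EuclideanSpace ℝ (Fin n))) (f' (x s))) (x s) :=
        (hf' (x s)).hasFDerivAt
      have := hφF.comp_hasDerivWithinAt s (hode s hs.1)
      simpa [InnerProductSpace.toDual_apply_apply, Function.comp_def] using this.mono Icc_subset_Ici_self
    have hlin : HasDerivWithinAt (fun s : ℝ => s * c) c (Icc 0 t) s := by
      simpa using (hasDerivWithinAt_id s (Icc (0:ℝ) t)).mul_const c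
    exact hF.add hlin
  have hH_anti : AntitoneOn (fun s => f (x s) + s * c) (Icc 0 t) := by
    refine antitoneOn_of_hasDerivWithinAt_nonpos (convex_Icc (0:ℝ) t)
      (fun s hs => (hHd s hs).continuousWithinAt)
      (f' := fun s => ⟪f' (x s), -gφs (f' (x s))⟫ + c) ?_ ?_
    · intro s hs
      rw [interior_Icc] at hs ⊢
      exact (hHd s ⟨hs.1.le, hs.2.le⟩).mono Ioo_subset_Icc_self
    · intro s hs
      rw [interior_Icc] at hs
      have h1 : φs (f' (x s)) ≤ ⟪gφs (f' (x s)), f' (x s)⟫ := hkey _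
      have h2 : c ≤ φs (f' (x s)) := hGt s ⟨hs.1.le, hs.2.le⟩
      show ⟪f' (x s), -gφs (f' (x s))⟫ + c ≤ 0
      rw [inner_neg_right, real_inner_comm]
      linarith
  have hHt : f (x t) + t * c ≤ f x₀ := by
    have := hH_anti (show (0:ℝ) ∈ Icc 0 t from ⟨le_refl 0, ht.le⟩)
      (show t ∈ Icc (0:ℝ) t from ⟨ht.le, le_refl t⟩) ht.le
    simpa [hx_init] using this
  -- f is bounded below
  have hK : IsCompact {z : EuclideanSpace ℝ (Fin n) | f z ≤ f 0} :=
    Metric.isCompact_of_isClosed_isBounded (isClosed_le hf.continuous continuous_const) (hf_lb (f 0))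
  obtain ⟨z₀, hz₀K, hz₀⟩ := hK.exists_isMinOn ⟨0, by simp⟩ hf.continuous.continuousOn
  have hbdd : BddBelow (range f) := by
    refine ⟨f z₀, ?_⟩
    rintro _ ⟨w, rfl⟩
    by_cases hw : f w ≤ f 0
    · exact isMinOn_iff.mp hz₀ w hw
    · exact le_trans (isMinOn_iff.mp hz₀ 0 (by simp)) (le_of_not_ge hw)
  have hinf : (⨅ z, f z) ≤ f (x t) := ciInf_le hbdd (x t)
  rw [le_div_iff₀ ht]
  linarith
end
end

section
/- Let f additionally be convex and let φ = h ∘ ‖·‖ be isotropic. Let x : [0, ∞) → ℝⁿ be the unique global solution of ẋ(t) = −∇φ*(∇f(x(t))) with x(0) = x₀. Then t ↦ ‖∇f(x(t))‖ is nonincreasing on [0, ∞). -/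
open MeasureTheory Filter Topology Set
open scoped RealInnerProductSpace

noncomputable section

section Aux

variable {n : ℕ}

local notation "E" => EuclideanSpace ℝ (Fin n)

/-- Monotonicity of the gradient of a convex function. -/
lemma aux_grad_mono {f : E → ℝ} {f' : E → E}
    (hf_conv : ConvexOn ℝ Set.univ f) (hf' : ∀ z, HasGradientAt f (f' z) z)
    (a b : E) : ⟪f' a, b - a⟫ ≤ ⟪f' b, b - a⟫ := by
  set L : ℝ → E := fun s => a + s • (b - a) with hL
  have hconv : ConvexOn ℝ Set.univ (fun s : ℝ => f (L s)) := by
    have := hf_conv.comp_affineMap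
      (AffineMap.const ℝ ℝ a + (LinearMap.toSpanSingleton ℝ E (b - a)).toAffineMap)
    simpa [Function.comp_def, hL, add_comm] using this
  have hd : ∀ s : ℝ, HasDerivAt (fun s : ℝ => f (L s)) ⟪f' (L s), b - a⟫ s := by
    intro s
    have h1 : HasDerivAt L (b - a) s := by
      simpa [hL] using ((hasDerivAt_id s).smul_const (b - a)).const_add a
    have h2 := ((hf' (L s)).hasFDerivAt).comp_hasDerivAt s h1
    simp only [InnerProductSpace.toDual_apply_apply] at h2
    exact h2
  have hmono := hconv.monotoneOn_deriv (fun s _ => (hd s).differentiableAt)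
  have h01 := hmono (mem_univ (0:ℝ)) (mem_univ (1:ℝ)) zero_le_one
  rw [(hd 0).deriv, (hd 1).deriv] at h01
  simpa [hL] using h01

/-- Positive semidefiniteness of the Hessian of a convex function. -/
lemma aux_hess_psd {f : E → ℝ} {f' : E → E}
    (hf_conv : ConvexOn ℝ Set.univ f) (hf' : ∀ z, HasGradientAt f (f' z) z)
    (hf'd : Differentiable ℝ f')
    (a u : E) : 0 ≤ ⟪u, fderiv ℝ f' a u⟫ := by
  set w : ℝ → ℝ := fun s => ⟪f' (a + s • u), u⟫ - ⟪f' a, u⟫ with hw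
  have hc : ∀ s : ℝ, HasDerivAt (fun s : ℝ => a + s • u) u s := fun s => by
    simpa using ((hasDerivAt_id s).smul_const u).const_add a
  have hgd : HasDerivAt (fun s : ℝ => f' (a + s • u)) (fderiv ℝ f' a u) 0 := by
    have := ((hf'd (a + (0:ℝ) • u)).hasFDerivAt).comp_hasDerivAt 0 (hc 0)
    simp only [zero_smul, add_zero] at this
    exact this
  have hwd : HasDerivAt w ⟪fderiv ℝ f' a u, u⟫ 0 := by
    have := hgd.inner (𝕜 := ℝ) (hasDerivAt_const (0:ℝ) u)
    simpa [hw] using this.sub_const ⟪f' a, u⟫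
  have hslope : Tendsto (slope w 0) (𝓝[≠] 0) (𝓝 ⟪fderiv ℝ f' a u, u⟫) :=
    hasDerivAt_iff_tendsto_slope.1 hwd
  have hnn : ∀ s : ℝ, s ≠ 0 → 0 ≤ slope w 0 s := by
    intro s hs
    have hmo := aux_grad_mono hf_conv hf' a (a + s • u)
    have hsw : 0 ≤ s * w s := by
      have heq : a + s • u - a = s • u := by abel
      rw [heq, real_inner_smul_right, real_inner_smul_right] at hmo
      have hws : s * w s = s * ⟪f' (a + s • u), u⟫ - s * ⟪f' a, u⟫ := by
        rw [hw]; ring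
      linarith
    have hw0 : w 0 = 0 := by simp [hw]
    rw [slope_def_field, hw0, sub_zero, sub_zero]
    have : w s / s = (s * w s) / (s * s) := by
      rw [mul_div_mul_left _ _ hs]
    rw [this]
    exact div_nonneg hsw (mul_self_nonneg s)
  have : 0 ≤ ⟪fderiv ℝ f' a u, u⟫ :=
    ge_of_tendsto hslope (eventually_nhdsWithin_of_forall hnn)
  rwa [real_inner_comm]

/-- Nonnegativity of the derivative of a strictly monotone function. -/
lemma aux_deriv_nonneg {g g' : ℝ → ℝ} (hg : ∀ r, HasDerivAt g (g' r) r)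
    (hmono : StrictMonoOn g (Ici (0:ℝ))) {r : ℝ} (hr : 0 < r) : 0 ≤ g' r := by
  have hslope : Tendsto (slope g r) (𝓝[≠] r) (𝓝 (g' r)) :=
    hasDerivAt_iff_tendsto_slope.1 (hg r)
  have hev : ∀ᶠ s in 𝓝[≠] r, 0 ≤ slope g r s := by
    have h1 : ∀ᶠ s in 𝓝[≠] r, s ∈ Ioi (0:ℝ) :=
      eventually_nhdsWithin_of_eventually_nhds (eventually_of_mem (Ioi_mem_nhds hr) fun s hs => hs)
    filter_upwards [h1, eventually_mem_nhdsWithin] with s hs0 hsne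
    rw [slope_def_field]
    rcases lt_or_gt_of_ne (hsne : s ≠ r) with hlt | hgt
    · rw [div_nonneg_iff]
      right
      exact ⟨sub_nonpos.2 (hmono.monotoneOn (le_of_lt (Set.mem_Ioi.1 hs0)) hr.le hlt.le), by linarith⟩
    · apply div_nonneg
      · exact sub_nonneg.2 (hmono.monotoneOn hr.le (le_of_lt (Set.mem_Ioi.1 hs0)) hgt.le)
      · linarith
  exact ge_of_tendsto hslope hev

end Aux

theorem stmt_9 (n : ℕ)
    (f : EuclideanSpace ℝ (Fin n) → ℝ) (f' : EuclideanSpace ℝ (Fin n) → EuclideanSpace ℝ (Fin n))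
    (hf : ContDiff ℝ 2 f)
    (hf' : ∀ z, HasGradientAt f (f' z) z)
    (hf_lb : ∀ α : ℝ, Bornology.IsBounded {z | f z ≤ α})
    (hf_conv : ConvexOn ℝ Set.univ f)
    (h : ℝ → EReal)
    (hh_proper : ∃ r, h r ≠ ⊤)
    (hh_lsc : LowerSemicontinuous h)
    (hh_nonneg : ∀ r, 0 ≤ h r)
    (hh_even : ∀ r, h (-r) = h r)
    (hh_zero : h 0 = 0)
    (hh_es_dom : (interior {r | h r ≠ ⊤}).Nonempty)
    (hh_es_diff : DifferentiableOn ℝ (fun r => (h r).toReal) (interior {r | h r ≠ ⊤}))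
    (hh_es_blow : ∀ w ∈ frontier {r | h r ≠ ⊤}, ∀ seq : ℕ → ℝ,
      (∀ k, seq k ∈ interior {r | h r ≠ ⊤}) → Tendsto seq atTop (𝓝 w) →
      Tendsto (fun k => ‖deriv (fun r => (h r).toReal) (seq k)‖) atTop atTop)
    (μφ : ℝ) (hμφ : 0 < μφ)
    (hh_sconv : ∀ r s t : ℝ, 0 ≤ t → t ≤ 1 →
      h (t * r + (1 - t) * s) + ((μφ / 2 * (t * (1 - t)) * |r - s| ^ 2 : ℝ) : EReal)
        ≤ (t : EReal) * h r + ((1 - t : ℝ) : EReal) * h s)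
    (hs hs' : ℝ → ℝ)
    (hhs_conj : ∀ y : EuclideanSpace ℝ (Fin n),
      ((hs ‖y‖ : ℝ) : EReal) = ⨆ z : EuclideanSpace ℝ (Fin n), (((⟪z, y⟫ : ℝ) : EReal) - h ‖z‖))
    (hhs_deriv : ∀ r : ℝ, HasDerivAt hs (hs' r) r)
    (hhs_mono : StrictMonoOn hs (Ici (0:ℝ)))
    (gφs : EuclideanSpace ℝ (Fin n) → EuclideanSpace ℝ (Fin n))
    (hg_iso : ∀ y : EuclideanSpace ℝ (Fin n), y ≠ 0 → gφs y = (hs' ‖y‖ / ‖y‖) • y)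
    (hg_zero : gφs 0 = 0)
    (hgφs : ∀ y, HasGradientAt (fun z : EuclideanSpace ℝ (Fin n) => hs ‖z‖) (gφs y) y)
    (x₀ : EuclideanSpace ℝ (Fin n)) (x : ℝ → EuclideanSpace ℝ (Fin n))
    (hx_init : x 0 = x₀)
    (hode : ∀ t ∈ Ici (0:ℝ), HasDerivWithinAt x (-gφs (f' (x t))) (Ici 0) t)
    :
    AntitoneOn (fun t => ‖f' (x t)‖) (Ici 0) := by
  classical
  -- differentiability of the gradient map
  have hf'd : Differentiable ℝ f' := by
    have h1 : ContDiff ℝ 1 (fderiv ℝ f) := hf.fderiv_right (by norm_num)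
    have h2 : Differentiable ℝ (fderiv ℝ f) := h1.differentiable one_ne_zero
    have h3 : Differentiable ℝ (fun z =>
        (InnerProductSpace.toDual ℝ (EuclideanSpace ℝ (Fin n))).symm (fderiv ℝ f z)) :=
      ((InnerProductSpace.toDual ℝ (EuclideanSpace ℝ (Fin n))).symm.toContinuousLinearMap.differentiable).comp h2
    have heq : f' = fun z =>
        (InnerProductSpace.toDual ℝ (EuclideanSpace ℝ (Fin n))).symm (fderiv ℝ f z) := by
      funext z
      have := ((hf' z).hasFDerivAt).fderiv
      rw [this]
      simp
    rw [heq]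
    exact h3
  -- the squared norm of the gradient along the trajectory
  set F : ℝ → ℝ := fun t => ⟪f' (x t), f' (x t)⟫ with hF
  have hxcont : ContinuousOn x (Ici (0:ℝ)) := fun t ht => (hode t ht).continuousWithinAt
  have hFcont : ContinuousOn F (Ici (0:ℝ)) := by
    have hfx : ContinuousOn (fun t => f' (x t)) (Ici (0:ℝ)) :=
      hf'd.continuous.comp_continuousOn hxcont
    exact hfx.inner hfx
  have hFderiv : ∀ t ∈ Ioi (0:ℝ), ∃ d : ℝ, HasDerivAt F d t ∧ d ≤ 0 := by
    intro t ht
    have hxt : HasDerivAt x (-gφs (f' (x t))) t :=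
      (hode t (le_of_lt (Set.mem_Ioi.1 ht))).hasDerivAt (Ici_mem_nhds ht)
    set y := f' (x t) with hy
    set D := fderiv ℝ f' (x t) with hD
    have hft : HasDerivAt (fun τ => f' (x τ)) (D (-gφs y)) t :=
      ((hf'd (x t)).hasFDerivAt).comp_hasDerivAt t hxt
    have hFd : HasDerivAt F (⟪y, D (-gφs y)⟫ + ⟪D (-gφs y), y⟫) t := hft.inner (𝕜 := ℝ) hft
    refine ⟨_, hFd, ?_⟩
    have hkey : ⟪y, D (-gφs y)⟫ ≤ 0 := by
      by_cases hy0 : y = 0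
      · simp [hy0, hg_zero]
      · rw [hg_iso y hy0]
        have hDy : D (-((hs' ‖y‖ / ‖y‖) • y)) = -((hs' ‖y‖ / ‖y‖) • D y) := by
          rw [map_neg, D.map_smul]
        rw [hDy, inner_neg_right, real_inner_smul_right]
        have hc : 0 ≤ hs' ‖y‖ / ‖y‖ :=
          div_nonneg (aux_deriv_nonneg hhs_deriv hhs_mono (norm_pos_iff.2 hy0)) (norm_nonneg y)
        have hpsd : 0 ≤ ⟪y, D y⟫ := aux_hess_psd hf_conv hf' hf'd (x t) y
        nlinarith
    have hkey2 : ⟪D (-gφs y), y⟫ ≤ 0 := by rwa [real_inner_comm]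
    linarith
  have hFanti : AntitoneOn F (Ici (0:ℝ)) := by
    apply antitoneOn_of_deriv_nonpos (convex_Ici 0) hFcont
    · intro t ht
      rw [interior_Ici] at ht
      obtain ⟨d, hd, _⟩ := hFderiv t ht
      exact hd.differentiableAt.differentiableWithinAt
    · intro t ht
      rw [interior_Ici] at ht
      obtain ⟨d, hd, hdle⟩ := hFderiv t ht
      rw [hd.deriv]
      exact hdle
  intro s hsm t htm hst
  have := hFanti hsm htm hst
  have hFs : ∀ τ, F τ = ‖f' (x τ)‖ ^ 2 := fun τ => real_inner_self_eq_norm_sq _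
  rw [hFs, hFs] at this
  exact le_of_pow_le_pow_left₀ two_ne_zero (norm_nonneg _) this
end
end

section
/- Let f additionally be convex, let φ = h ∘ ‖·‖ be isotropic, suppose the map y ↦ h*′(y)/y is nonincreasing on (0, ∞), and let x⋆ be a minimizer of f. Let x : [0, ∞) → ℝⁿ be the unique global solution of ẋ(t) = −∇φ*(∇f(x(t))) with x(0) = x₀ where ∇f(x₀) ≠ 0. Then the function W(t) := t · (h*′(‖∇f(x₀)‖)/‖∇f(x₀)‖) · (f(x(t)) − f⋆) + ½‖x(t) − x⋆‖² is nonincreasing on [0, ∞). -/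
open MeasureTheory Filter Topology Set
open scoped RealInnerProductSpace

noncomputable section

private lemma deriv_le_of_slope {q : ℝ → ℝ} {q' cc t : ℝ}
    (hd : HasDerivAt q q' t) (hb : ∀ᶠ s in 𝓝[>] t, slope q t s ≤ cc) : q' ≤ cc := by
  have hsub : Set.Ioi t ⊆ ({t}ᶜ : Set ℝ) := fun s hs => ne_of_gt hs
  exact le_of_tendsto ((hasDerivAt_iff_tendsto_slope.mp hd).mono_left
    (nhdsWithin_mono _ hsub)) hb

private lemma le_deriv_of_slope {q : ℝ → ℝ} {q' cc t : ℝ}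
    (hd : HasDerivAt q q' t) (hb : ∀ᶠ s in 𝓝[>] t, cc ≤ slope q t s) : cc ≤ q' := by
  have hsub : Set.Ioi t ⊆ ({t}ᶜ : Set ℝ) := fun s hs => ne_of_gt hs
  exact ge_of_tendsto ((hasDerivAt_iff_tendsto_slope.mp hd).mono_left
    (nhdsWithin_mono _ hsub)) hb

set_option maxHeartbeats 2000000 in
theorem stmt_11 (n : ℕ)
    (f : EuclideanSpace ℝ (Fin n) → ℝ) (f' : EuclideanSpace ℝ (Fin n) → EuclideanSpace ℝ (Fin n))
    (hf : ContDiff ℝ 2 f)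
    (hf' : ∀ z, HasGradientAt f (f' z) z)
    (hf_lb : ∀ α : ℝ, Bornology.IsBounded {z | f z ≤ α})
    (hf_conv : ConvexOn ℝ Set.univ f)
    (h : ℝ → EReal)
    (hh_proper : ∃ r, h r ≠ ⊤)
    (hh_lsc : LowerSemicontinuous h)
    (hh_nonneg : ∀ r, 0 ≤ h r)
    (hh_even : ∀ r, h (-r) = h r)
    (hh_zero : h 0 = 0)
    (hh_es_dom : (interior {r | h r ≠ ⊤}).Nonempty)
    (hh_es_diff : DifferentiableOn ℝ (fun r => (h r).toReal) (interior {r | h r ≠ ⊤}))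
    (hh_es_blow : ∀ w ∈ frontier {r | h r ≠ ⊤}, ∀ seq : ℕ → ℝ,
      (∀ k, seq k ∈ interior {r | h r ≠ ⊤}) → Tendsto seq atTop (𝓝 w) →
      Tendsto (fun k => ‖deriv (fun r => (h r).toReal) (seq k)‖) atTop atTop)
    (μφ : ℝ) (hμφ : 0 < μφ)
    (hh_sconv : ∀ r s t : ℝ, 0 ≤ t → t ≤ 1 →
      h (t * r + (1 - t) * s) + ((μφ / 2 * (t * (1 - t)) * |r - s| ^ 2 : ℝ) : EReal)
        ≤ (t : EReal) * h r + ((1 - t : ℝ) : EReal) * h s)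
    (hs hs' : ℝ → ℝ)
    (hhs_conj : ∀ y : EuclideanSpace ℝ (Fin n),
      ((hs ‖y‖ : ℝ) : EReal) = ⨆ z : EuclideanSpace ℝ (Fin n), (((⟪z, y⟫ : ℝ) : EReal) - h ‖z‖))
    (hhs_deriv : ∀ r : ℝ, HasDerivAt hs (hs' r) r)
    (hhs_mono : StrictMonoOn hs (Ici (0:ℝ)))
    (gφs : EuclideanSpace ℝ (Fin n) → EuclideanSpace ℝ (Fin n))
    (hg_iso : ∀ y : EuclideanSpace ℝ (Fin n), y ≠ 0 → gφs y = (hs' ‖y‖ / ‖y‖) • y)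
    (hg_zero : gφs 0 = 0)
    (hgφs : ∀ y, HasGradientAt (fun z : EuclideanSpace ℝ (Fin n) => hs ‖z‖) (gφs y) y)
    (xstar : EuclideanSpace ℝ (Fin n)) (hxstar : ∀ z, f xstar ≤ f z)
    (x₀ : EuclideanSpace ℝ (Fin n)) (x : ℝ → EuclideanSpace ℝ (Fin n))
    (hx_init : x 0 = x₀)
    (hode : ∀ t ∈ Ici (0:ℝ), HasDerivWithinAt x (-gφs (f' (x t))) (Ici 0) t)
    (hdec : ∀ a b : ℝ, 0 < a → a ≤ b → hs' b / b ≤ hs' a / a)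
    (hgrad_ne : f' x₀ ≠ 0)
    :
    AntitoneOn
      (fun t => t * (hs' ‖f' x₀‖ / ‖f' x₀‖) * (f (x t) - ⨅ z, f z)
          + 1 / 2 * ‖x t - xstar‖ ^ 2)
      (Ici 0) := by
  have hbdd : BddBelow (Set.range f) := ⟨f xstar, by rintro _ ⟨z, rfl⟩; exact hxstar z⟩
  set K := ⨅ z, f z with hKdef
  set c := hs' ‖f' x₀‖ / ‖f' x₀‖ with hcdef
  have hKx : K = f xstar := le_antisymm (ciInf_le hbdd xstar) (le_ciInf hxstar)
  have hKle : ∀ z, K ≤ f z := fun z => hKx ▸ hxstar z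
  -- first-order convexity inequality
  have grad_ineq : ∀ a b, f a + ⟪f' a, b - a⟫ ≤ f b := by
    intro a b
    have hline : HasDerivAt (fun s : ℝ => a + s • (b - a)) (b - a) 0 := by
      simpa using ((hasDerivAt_id (0:ℝ)).smul_const (b - a)).const_add a
    have hF : HasFDerivAt f (InnerProductSpace.toDual ℝ _ (f' a))
        (a + (0:ℝ) • (b - a)) := by
      simpa using hasGradientAt_iff_hasFDerivAt.mp (hf' a)
    have hq : HasDerivAt (fun s : ℝ => f (a + s • (b - a))) ⟪f' a, b - a⟫ 0 := by
      exact hF.comp_hasDerivAt 0 hline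
    have hub : ⟪f' a, b - a⟫ ≤ f b - f a := by
      apply deriv_le_of_slope hq
      filter_upwards [Ioc_mem_nhdsGT (zero_lt_one)] with s hsm
      have hs0 : (0:ℝ) < s := hsm.1
      have hconv := hf_conv.2 (mem_univ a) (mem_univ b)
        (by linarith [hsm.2] : (0:ℝ) ≤ 1 - s) (le_of_lt hs0) (by ring)
      have heq : a + s • (b - a) = (1 - s) • a + s • b := by module
      rw [slope_def_field]
      rw [heq]
      rw [div_le_iff₀ (by simpa using hs0)]
      simp only [zero_smul, add_zero, smul_eq_mul] at hconv ⊢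
      ring_nf at hconv ⊢
      ring_nf
      nlinarith [hconv]
    linarith
  -- gradient monotonicity
  have grad_mono : ∀ a b, 0 ≤ ⟪f' b - f' a, b - a⟫ := by
    intro a b
    have h1 := grad_ineq a b
    have h2 := grad_ineq b a
    have h3 : ⟪f' b, a - b⟫ = -⟪f' b, b - a⟫ := by
      rw [show a - b = -(b - a) by abel, inner_neg_right]
    rw [inner_sub_left]
    linarith
  -- f' is C¹
  have hf'eq : f' = fun z => (InnerProductSpace.toDual ℝ _).symm (fderiv ℝ f z) := by
    funext z
    rw [(hasGradientAt_iff_hasFDerivAt.mp (hf' z)).fderiv,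
      LinearIsometryEquiv.symm_apply_apply]
  have hf'cd : ContDiff ℝ 1 f' := by
    rw [hf'eq]
    exact (LinearIsometryEquiv.contDiff _).comp (hf.fderiv_right (by norm_num))
  set f'' := fun z => fderiv ℝ f' z with hf''def
  have hf''at : ∀ z, HasFDerivAt f' (f'' z) z :=
    fun z => ((hf'cd.differentiable one_ne_zero) z).hasFDerivAt
  -- Hessian PSD
  have hess_psd : ∀ a v, 0 ≤ ⟪v, f'' a v⟫ := by
    intro a v
    have hline : HasDerivAt (fun s : ℝ => a + s • v) v 0 := by
      simpa using ((hasDerivAt_id (0:ℝ)).smul_const v).const_add a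
    have hF : HasFDerivAt f' (f'' a) (a + (0:ℝ) • v) := by simpa using hf''at a
    have hcurve : HasDerivAt (fun s : ℝ => f' (a + s • v)) (f'' a v) 0 :=
      hF.comp_hasDerivAt 0 hline
    have hq : HasDerivAt (fun s : ℝ => ⟪f' (a + s • v), v⟫) ⟪f'' a v, v⟫ 0 := by
      simpa using HasDerivAt.inner ℝ hcurve (hasDerivAt_const (0:ℝ) v)
    have hpos : 0 ≤ ⟪f'' a v, v⟫ := by
      apply le_deriv_of_slope hq
      filter_upwards [self_mem_nhdsWithin] with s hs0
      have hs0 : (0:ℝ) < s := hs0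
      have hm := grad_mono a (a + s • v)
      rw [show a + s • v - a = s • v by abel, real_inner_smul_right, inner_sub_left] at hm
      rw [slope_def_field]
      apply div_nonneg _ (by linarith)
      have := (mul_nonneg_iff_of_pos_left hs0).mp hm
      simpa using this
    rw [real_inner_comm]
    exact hpos
  -- hs' nonneg on [0, ∞)
  have hs'_nonneg : ∀ r : ℝ, 0 ≤ r → 0 ≤ hs' r := by
    intro r hr
    apply le_deriv_of_slope (hhs_deriv r)
    filter_upwards [self_mem_nhdsWithin] with s hsr
    rw [slope_def_field]
    apply div_nonneg _ (by linarith [mem_Ioi.mp hsr])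
    have : hs r < hs s := hhs_mono hr (le_trans hr (le_of_lt hsr)) hsr
    linarith
  have hc0 : 0 ≤ c := div_nonneg (hs'_nonneg _ (norm_nonneg _)) (norm_nonneg _)
  -- continuity of x
  have hx_cont : ContinuousOn x (Ici 0) := fun t ht => (hode t ht).continuousWithinAt
  have hxat : ∀ t : ℝ, 0 < t → HasDerivAt x (-gφs (f' (x t))) t :=
    fun t ht => (hode t (le_of_lt ht)).hasDerivAt (Ici_mem_nhds ht)
  -- ψ = ‖f'(x t)‖² is nonincreasing
  set ψ : ℝ → ℝ := fun t => ⟪f' (x t), f' (x t)⟫ with hψdef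
  have hψat : ∀ t : ℝ, 0 < t → HasDerivAt ψ
      (⟪f' (x t), f'' (x t) (-gφs (f' (x t)))⟫
        + ⟪f'' (x t) (-gφs (f' (x t))), f' (x t)⟫) t := by
    intro t ht
    have hcurve : HasDerivAt (fun t => f' (x t)) (f'' (x t) (-gφs (f' (x t)))) t :=
      (hf''at (x t)).comp_hasDerivAt t (hxat t ht)
    exact HasDerivAt.inner ℝ hcurve hcurve
  have hψ_anti : AntitoneOn ψ (Ici 0) := by
    apply antitoneOn_of_deriv_nonpos (convex_Ici 0)
    · exact ContinuousOn.inner (hf'cd.continuous.comp_continuousOn hx_cont)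
        (hf'cd.continuous.comp_continuousOn hx_cont)
    · rw [interior_Ici]
      exact fun t ht => (hψat t ht).differentiableAt.differentiableWithinAt
    · rw [interior_Ici]
      intro t ht
      rw [(hψat t ht).deriv]
      set v := f' (x t) with hv
      by_cases hv0 : v = 0
      · simp [hv0, hg_zero]
      · have hlam0 : 0 ≤ hs' ‖v‖ / ‖v‖ :=
          div_nonneg (hs'_nonneg _ (norm_nonneg _)) (norm_nonneg _)
        have hP := hess_psd (x t) v
        rw [hg_iso v hv0]
        have heq : f'' (x t) (-((hs' ‖v‖ / ‖v‖) • v))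
            = -((hs' ‖v‖ / ‖v‖) • (f'' (x t) v)) := by
          rw [map_neg, ContinuousLinearMap.map_smul]
        rw [heq, inner_neg_right, inner_neg_left, real_inner_smul_right,
          real_inner_smul_left]
        have hcomm : ⟪(f'' (x t)) v, v⟫ = ⟪v, (f'' (x t)) v⟫ := real_inner_comm _ _
        rw [hcomm]
        nlinarith [mul_nonneg hlam0 hP]
  have hnorm_le : ∀ t : ℝ, 0 ≤ t → ‖f' (x t)‖ ≤ ‖f' x₀‖ := by
    intro t ht
    have h1 : ψ t ≤ ψ 0 := hψ_anti (self_mem_Ici) ht ht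
    rw [hψdef] at h1
    simp only [hx_init] at h1
    rw [real_inner_self_eq_norm_sq, real_inner_self_eq_norm_sq] at h1
    exact (pow_le_pow_iff_left₀ (norm_nonneg _) (norm_nonneg _) two_ne_zero).mp h1
  -- derivative of W
  have hWat : ∀ t : ℝ, 0 < t →
      HasDerivAt (fun t => t * c * (f (x t) - K) + 1 / 2 * ‖x t - xstar‖ ^ 2)
        (c * (f (x t) - K) + t * c * ⟪f' (x t), -gφs (f' (x t))⟫
          + ⟪x t - xstar, -gφs (f' (x t))⟫) t := by
    intro t ht
    have hxat' := hxat t ht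
    have h1 : HasDerivAt (fun t => f (x t)) ⟪f' (x t), -gφs (f' (x t))⟫ t := by
      have hF : HasFDerivAt f (InnerProductSpace.toDual ℝ _ (f' (x t))) (x t) :=
        hasGradientAt_iff_hasFDerivAt.mp (hf' (x t))
      exact hF.comp_hasDerivAt t hxat'
    have h2 : HasDerivAt (fun t => t * c * (f (x t) - K))
        (c * (f (x t) - K) + t * c * ⟪f' (x t), -gφs (f' (x t))⟫) t := by
      have := ((hasDerivAt_id t).mul_const c).mul (h1.sub_const K)
      refine this.congr_deriv ?_
      simp
    have h3 : HasDerivAt (fun t => 1 / 2 * ‖x t - xstar‖ ^ 2)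
        ⟪x t - xstar, -gφs (f' (x t))⟫ t := by
      have h3a := (HasDerivAt.inner ℝ (hxat'.sub_const xstar)
        (hxat'.sub_const xstar)).const_mul (1/2 : ℝ)
      have hfun : (fun y : ℝ => (1/2 : ℝ) * ⟪x y - xstar, x y - xstar⟫)
          = fun y => 1 / 2 * ‖x y - xstar‖ ^ 2 := by
        funext y; rw [real_inner_self_eq_norm_sq]
      rw [hfun] at h3a
      refine h3a.congr_deriv ?_
      rw [real_inner_comm (-gφs (f' (x t))) (x t - xstar)]
      ring
    exact h2.add h3
  -- conclude
  apply antitoneOn_of_deriv_nonpos (convex_Ici 0)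
  · apply ContinuousOn.add
    · exact ((continuous_id.mul continuous_const).continuousOn).mul
        ((hf.continuous.comp_continuousOn hx_cont).sub continuousOn_const)
    · exact continuousOn_const.mul (((hx_cont.sub continuousOn_const).norm).pow 2)
  · rw [interior_Ici]
    exact fun t ht => (hWat t ht).differentiableAt.differentiableWithinAt
  · rw [interior_Ici]
    intro t ht
    rw [(hWat t ht).deriv]
    set v := f' (x t) with hv
    have ht0 : (0:ℝ) ≤ t := le_of_lt ht
    have hfK : K ≤ f (x t) := hKle _
    by_cases hv0 : v = 0
    · have hle : f (x t) ≤ K := by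
        have hgi := grad_ineq (x t) xstar
        rw [← hv, hv0] at hgi
        rw [hKx]
        simpa using hgi
      have hfx : f (x t) - K = 0 := by linarith
      simp [hv0, hg_zero, hfx]
    · set lam := hs' ‖v‖ / ‖v‖ with hlamdef
      have hvpos : 0 < ‖v‖ := norm_pos_iff.mpr hv0
      have hlamc : c ≤ lam := hdec ‖v‖ ‖f' x₀‖ hvpos (hnorm_le t ht0)
      have hlam0 : 0 ≤ lam := div_nonneg (hs'_nonneg _ (norm_nonneg _)) (norm_nonneg _)
      have hxteq : -gφs v = -(lam • v) := by rw [hg_iso v hv0]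
      have hinner1 : ⟪v, -gφs v⟫ = -(lam * ⟪v, v⟫) := by
        rw [hxteq, inner_neg_right, real_inner_smul_right]
      have hinner2 : ⟪x t - xstar, -gφs v⟫ = -(lam * ⟪v, x t - xstar⟫) := by
        rw [hxteq, inner_neg_right, real_inner_smul_right,
          real_inner_comm (x t - xstar) v]
      have hvv : 0 ≤ ⟪v, v⟫ := real_inner_self_nonneg
      have hgi : f (x t) - K ≤ ⟪v, x t - xstar⟫ := by
        have h5 := grad_ineq (x t) xstar
        rw [← hv] at h5
        have h6 : ⟪v, xstar - x t⟫ = -⟪v, x t - xstar⟫ := by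
          rw [show xstar - x t = -(x t - xstar) by abel, inner_neg_right]
        rw [hKx]
        linarith
      have hkey : c * (f (x t) - K) ≤ lam * ⟪v, x t - xstar⟫ :=
        le_trans (mul_le_mul_of_nonneg_right hlamc (by linarith))
          (mul_le_mul_of_nonneg_left hgi hlam0)
      have hterm2 : t * c * ⟪v, -gφs v⟫ ≤ 0 := by
        rw [hinner1, mul_neg]
        exact neg_nonpos.mpr (mul_nonneg (mul_nonneg ht0 hc0) (mul_nonneg hlam0 hvv))
      rw [hinner2]
      linarith
end
end

section
/- Let f additionally be convex, let φ = h ∘ ‖·‖ be isotropic, suppose the map y ↦ h*′(y)/y is nonincreasing on (0, ∞), and let x⋆ be a minimizer of f. Let x : [0, ∞) → ℝⁿ be the unique global solution of ẋ(t) = −∇φ*(∇f(x(t))) with x(0) = x₀ where ∇f(x₀) ≠ 0. Then for every t > 0, f(x(t)) − f⋆ ≤ ‖∇f(x₀)‖ · ‖x₀ − x⋆‖² / (h*′(‖∇f(x₀)‖) · t). -/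
open MeasureTheory Filter Topology Set
open scoped RealInnerProductSpace

noncomputable section

private lemma aux_hs'_pos (hs hs' : ℝ → ℝ)
    (hhs_deriv : ∀ r : ℝ, HasDerivAt hs (hs' r) r)
    (hhs_mono : StrictMonoOn hs (Ici (0:ℝ)))
    (hdec : ∀ a b : ℝ, 0 < a → a ≤ b → hs' b / b ≤ hs' a / a) :
    ∀ r : ℝ, 0 < r → 0 < hs' r := by
  have hnn : ∀ r : ℝ, 0 ≤ r → 0 ≤ hs' r := by
    intro r hr
    have hT : Tendsto (slope hs r) (𝓝[>] r) (𝓝 (hs' r)) :=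
      (hasDerivAt_iff_tendsto_slope.1 (hhs_deriv r)).mono_left
        (nhdsWithin_mono r fun u hu => ne_of_gt hu)
    refine ge_of_tendsto hT ?_
    filter_upwards [self_mem_nhdsWithin] with u hu
    have hu' : r < u := hu
    have : hs r ≤ hs u := (hhs_mono.monotoneOn hr (hr.trans hu'.le)) hu'.le
    rw [slope_def_field]
    exact div_nonneg (by linarith) (by linarith)
  intro r hr
  by_contra hcon
  push_neg at hcon
  have hr0 : hs' r = 0 := le_antisymm hcon (hnn r hr.le)
  have hz : ∀ b : ℝ, r ≤ b → hs' b = 0 := by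
    intro b hb
    have hbpos : 0 < b := lt_of_lt_of_le hr hb
    have := hdec r b hr hb
    rw [hr0, zero_div] at this
    have hble : hs' b ≤ 0 := by
      have := (div_le_iff₀ hbpos).mp this
      simpa using this
    exact le_antisymm hble (hnn b hbpos.le)
  have hconst : hs (r+1) = hs r := by
    have := constant_of_has_deriv_right_zero (f := hs) (a := r) (b := r+1)
      (fun u _ => (hhs_deriv u).continuousAt.continuousWithinAt)
      (fun u hu => by
        have : hs' u = 0 := hz u hu.1
        simpa [this] using (hhs_deriv u).hasDerivWithinAt)
    exact this (r+1) (by constructor <;> linarith)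
  have : hs r < hs (r+1) := hhs_mono (le_of_lt hr) (by simp; linarith) (by linarith)
  linarith

private lemma aux_grad_ineq_s12 {n : ℕ} (f : EuclideanSpace ℝ (Fin n) → ℝ)
    (f' : EuclideanSpace ℝ (Fin n) → EuclideanSpace ℝ (Fin n))
    (hf' : ∀ z, HasGradientAt f (f' z) z)
    (hf_conv : ConvexOn ℝ Set.univ f) :
    ∀ z w, f z + ⟪f' z, w - z⟫ ≤ f w := by
  intro z w
  set ψ : ℝ → ℝ := fun t => f (z + t • (w - z)) with hψdef
  have hcurve : HasDerivAt (fun t : ℝ => z + t • (w - z)) (w - z) 0 := by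
    simpa using ((hasDerivAt_id (0:ℝ)).smul_const (w - z)).const_add z
  have hψ : HasDerivAt ψ ⟪f' z, w - z⟫ 0 := by
    have := ((hf' (z + (0:ℝ) • (w - z))).hasFDerivAt).comp_hasDerivAt 0 hcurve
    simp [InnerProductSpace.toDual_apply_apply] at this; exact this
  have hT : Tendsto (slope ψ 0) (𝓝[>] 0) (𝓝 (⟪f' z, w - z⟫)) :=
    (hasDerivAt_iff_tendsto_slope.1 hψ).mono_left
      (nhdsWithin_mono 0 fun u hu => ne_of_gt hu)
  have hle : ⟪f' z, w - z⟫ ≤ f w - f z := by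
    refine le_of_tendsto hT ?_
    filter_upwards [Ioc_mem_nhdsGT_of_mem (by constructor <;> norm_num : (0:ℝ) ∈ Ico (0:ℝ) 1)]
      with u hu
    have hu0 : 0 < u := hu.1
    have hu1 : u ≤ 1 := hu.2
    have hc := hf_conv.2 (mem_univ w) (mem_univ z) hu0.le (show (0:ℝ) ≤ 1-u by linarith) (show u + (1-u) = 1 by ring)
    have heq : u • w + (1 - u) • z = z + u • (w - z) := by module
    rw [heq] at hc
    rw [slope_def_field]
    have hψ0 : ψ 0 = f z := by simp [hψdef]
    have hψu : ψ u ≤ u * f w + (1 - u) * f z := by simpa [hψdef, smul_eq_mul] using hc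
    rw [hψ0, sub_zero, div_le_iff₀ hu0]
    nlinarith
  linarith

set_option maxHeartbeats 1000000 in
theorem stmt_12 (n : ℕ)
    (f : EuclideanSpace ℝ (Fin n) → ℝ) (f' : EuclideanSpace ℝ (Fin n) → EuclideanSpace ℝ (Fin n))
    (hf : ContDiff ℝ 2 f)
    (hf' : ∀ z, HasGradientAt f (f' z) z)
    (hf_lb : ∀ α : ℝ, Bornology.IsBounded {z | f z ≤ α})
    (hf_conv : ConvexOn ℝ Set.univ f)
    (h : ℝ → EReal)
    (hh_proper : ∃ r, h r ≠ ⊤)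
    (hh_lsc : LowerSemicontinuous h)
    (hh_nonneg : ∀ r, 0 ≤ h r)
    (hh_even : ∀ r, h (-r) = h r)
    (hh_zero : h 0 = 0)
    (hh_es_dom : (interior {r | h r ≠ ⊤}).Nonempty)
    (hh_es_diff : DifferentiableOn ℝ (fun r => (h r).toReal) (interior {r | h r ≠ ⊤}))
    (hh_es_blow : ∀ w ∈ frontier {r | h r ≠ ⊤}, ∀ seq : ℕ → ℝ,
      (∀ k, seq k ∈ interior {r | h r ≠ ⊤}) → Tendsto seq atTop (𝓝 w) →
      Tendsto (fun k => ‖deriv (fun r => (h r).toReal) (seq k)‖) atTop atTop)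
    (μφ : ℝ) (hμφ : 0 < μφ)
    (hh_sconv : ∀ r s t : ℝ, 0 ≤ t → t ≤ 1 →
      h (t * r + (1 - t) * s) + ((μφ / 2 * (t * (1 - t)) * |r - s| ^ 2 : ℝ) : EReal)
        ≤ (t : EReal) * h r + ((1 - t : ℝ) : EReal) * h s)
    (hs hs' : ℝ → ℝ)
    (hhs_conj : ∀ y : EuclideanSpace ℝ (Fin n),
      ((hs ‖y‖ : ℝ) : EReal) = ⨆ z : EuclideanSpace ℝ (Fin n), (((⟪z, y⟫ : ℝ) : EReal) - h ‖z‖))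
    (hhs_deriv : ∀ r : ℝ, HasDerivAt hs (hs' r) r)
    (hhs_mono : StrictMonoOn hs (Ici (0:ℝ)))
    (gφs : EuclideanSpace ℝ (Fin n) → EuclideanSpace ℝ (Fin n))
    (hg_iso : ∀ y : EuclideanSpace ℝ (Fin n), y ≠ 0 → gφs y = (hs' ‖y‖ / ‖y‖) • y)
    (hg_zero : gφs 0 = 0)
    (hgφs : ∀ y, HasGradientAt (fun z : EuclideanSpace ℝ (Fin n) => hs ‖z‖) (gφs y) y)
    (xstar : EuclideanSpace ℝ (Fin n)) (hxstar : ∀ z, f xstar ≤ f z)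
    (x₀ : EuclideanSpace ℝ (Fin n)) (x : ℝ → EuclideanSpace ℝ (Fin n))
    (hx_init : x 0 = x₀)
    (hode : ∀ t ∈ Ici (0:ℝ), HasDerivWithinAt x (-gφs (f' (x t))) (Ici 0) t)
    (hdec : ∀ a b : ℝ, 0 < a → a ≤ b → hs' b / b ≤ hs' a / a)
    (hgrad_ne : f' x₀ ≠ 0)
    :
    ∀ t : ℝ, 0 < t →
      f (x t) - (⨅ z, f z) ≤ ‖f' x₀‖ * ‖x₀ - xstar‖ ^ 2 / (hs' ‖f' x₀‖ * t) := by
  classical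
  -- minimum value
  have hinf : (⨅ z, f z) = f xstar := by
    refine le_antisymm (ciInf_le ⟨f xstar, ?_⟩ xstar) (le_ciInf hxstar)
    rintro y ⟨z, rfl⟩; exact hxstar z
  have hgrad : ∀ z w, f z + ⟪f' z, w - z⟫ ≤ f w := aux_grad_ineq_s12 f f' hf' hf_conv
  have hmono : ∀ a b : EuclideanSpace ℝ (Fin n), 0 ≤ ⟪f' a - f' b, a - b⟫ := by
    intro a b
    have h1 := hgrad a b
    have h2 := hgrad b a
    have e1 : ⟪f' a, b - a⟫ = -⟪f' a, a - b⟫ := by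
      rw [← inner_neg_right]; congr 1; abel
    rw [inner_sub_left]
    linarith
  have hs'pos : ∀ r : ℝ, 0 < r → 0 < hs' r := aux_hs'_pos hs hs' hhs_deriv hhs_mono hdec
  set F : ℝ → EuclideanSpace ℝ (Fin n) := fun s => f' (x s) with hFdef
  set v : ℝ → EuclideanSpace ℝ (Fin n) := fun s => -gφs (F s) with hvdef
  -- differentiability of f'
  have hf'diff : Differentiable ℝ f' := by
    have hfd : Differentiable ℝ (fderiv ℝ f) :=
      (hf.fderiv_right (by norm_num : (1:WithTop ℕ∞) + 1 ≤ 2)).differentiable one_ne_zero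
    have hf'eq : f' = fun z => (InnerProductSpace.toDual ℝ _).symm (fderiv ℝ f z) := by
      funext z
      rw [(hf' z).hasFDerivAt.fderiv]
      simp
    rw [hf'eq]
    exact (InnerProductSpace.toDual ℝ _).symm.differentiable.comp hfd
  have hxcont : ContinuousOn x (Ici (0:ℝ)) := fun s hsm => (hode s hsm).continuousWithinAt
  have hxD : ∀ s : ℝ, 0 < s → HasDerivAt x (v s) s := fun s hsp =>
    (hode s (le_of_lt hsp)).hasDerivAt (Ici_mem_nhds hsp)
  have hFcont : ContinuousOn F (Ici (0:ℝ)) := hf'diff.continuous.comp_continuousOn hxcont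
  -- derivative of F
  have hFD : ∀ s : ℝ, 0 < s → HasDerivAt F (fderiv ℝ f' (x s) (v s)) s := fun s hsp =>
    (hf'diff (x s)).hasFDerivAt.comp_hasDerivAt s (hxD s hsp)
  -- key inner product inequality
  have hWF : ∀ s : ℝ, 0 < s → ⟪fderiv ℝ f' (x s) (v s), F s⟫ ≤ 0 := by
    intro s hsp
    set W := fderiv ℝ f' (x s) (v s) with hWdef
    have hTX : Tendsto (slope x s) (𝓝[>] s) (𝓝 (v s)) :=
      (hasDerivAt_iff_tendsto_slope.1 (hxD s hsp)).mono_left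
        (nhdsWithin_mono s fun u hu => ne_of_gt hu)
    have hTF : Tendsto (slope F s) (𝓝[>] s) (𝓝 W) :=
      (hasDerivAt_iff_tendsto_slope.1 (hFD s hsp)).mono_left
        (nhdsWithin_mono s fun u hu => ne_of_gt hu)
    have hTI : Tendsto (fun u => ⟪slope F s u, slope x s u⟫) (𝓝[>] s) (𝓝 (⟪W, v s⟫)) :=
      hTF.inner hTX
    have hWv : 0 ≤ ⟪W, v s⟫ := by
      refine ge_of_tendsto hTI ?_
      filter_upwards [self_mem_nhdsWithin] with u hu
      have hus : s < u := hu
      have : slope F s u = (u - s)⁻¹ • (F u - F s) := by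
        rw [slope_def_module]
      have hx' : slope x s u = (u - s)⁻¹ • (x u - x s) := by
        rw [slope_def_module]
      rw [this, hx', real_inner_smul_left, real_inner_smul_right]
      have := hmono (x u) (x s)
      have hinv : 0 ≤ (u - s)⁻¹ := inv_nonneg.2 (by linarith)
      exact mul_nonneg hinv (mul_nonneg hinv this)
    by_cases hF0 : F s = 0
    · simp [hF0]
    · have hnormpos : 0 < ‖F s‖ := norm_pos_iff.2 hF0
      have hc : 0 < hs' ‖F s‖ / ‖F s‖ := div_pos (hs'pos _ hnormpos) hnormpos
      have hv : v s = -((hs' ‖F s‖ / ‖F s‖) • F s) := by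
        rw [hvdef]; simp only; rw [hg_iso (F s) hF0]
      rw [hv, inner_neg_right, real_inner_smul_right] at hWv
      by_contra hcon2
      push_neg at hcon2
      nlinarith [mul_pos hc hcon2]
  -- norm of gradient nonincreasing
  have hgD : ∀ s : ℝ, 0 < s →
      HasDerivAt (fun u => ⟪F u, F u⟫)
        (⟪F s, fderiv ℝ f' (x s) (v s)⟫ + ⟪fderiv ℝ f' (x s) (v s), F s⟫) s := by
    intro s hsp
    exact HasDerivAt.inner ℝ (hFD s hsp) (hFD s hsp)
  have hganti : AntitoneOn (fun u => ⟪F u, F u⟫) (Ici (0:ℝ)) := by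
    refine antitoneOn_of_deriv_nonpos (convex_Ici 0) (hFcont.inner hFcont) ?_ ?_
    · intro s hsm
      rw [interior_Ici] at hsm
      exact ((hgD s hsm).differentiableAt).differentiableWithinAt
    · intro s hsm
      rw [interior_Ici] at hsm
      rw [(hgD s hsm).deriv]
      have h1 := hWF s hsm
      have h2 : ⟪F s, fderiv ℝ f' (x s) (v s)⟫ = ⟪fderiv ℝ f' (x s) (v s), F s⟫ :=
        real_inner_comm _ _
      linarith
  have hFle : ∀ s : ℝ, 0 ≤ s → ‖F s‖ ≤ ‖f' x₀‖ := by
    intro s hsm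
    have h1 : ⟪F s, F s⟫ ≤ ⟪F 0, F 0⟫ := hganti self_mem_Ici hsm hsm
    rw [real_inner_self_eq_norm_sq, real_inner_self_eq_norm_sq] at h1
    have h0 : F 0 = f' x₀ := by rw [hFdef]; simp [hx_init]
    rw [h0] at h1
    nlinarith [norm_nonneg (F s), norm_nonneg (f' x₀)]
  -- Lyapunov function
  set b := ‖f' x₀‖ with hbdef
  have hb : 0 < b := norm_pos_iff.2 hgrad_ne
  have hp : 0 < hs' b := hs'pos b hb
  set c₀ := hs' b / b with hc₀def
  have hc₀ : 0 < c₀ := div_pos hp hb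
  set D : ℝ → ℝ := fun s => f (x s) - f xstar with hDdef
  have hDnonneg : ∀ s, 0 ≤ D s := fun s => by
    simp only [hDdef, sub_nonneg]; exact hxstar (x s)
  set Efun : ℝ → ℝ := fun s => c₀ * s * D s + ⟪x s - xstar, x s - xstar⟫ / 2 with hEdef
  -- derivative of f ∘ x
  have hfxD : ∀ s : ℝ, 0 < s → HasDerivAt (fun u => f (x u)) ⟪F s, v s⟫ s := by
    intro s hsp
    have := (hf' (x s)).hasFDerivAt.comp_hasDerivAt s (hxD s hsp)
    simp [InnerProductSpace.toDual_apply_apply] at this; exact this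
  have hED : ∀ s : ℝ, 0 < s → HasDerivAt Efun
      ((c₀ * D s + c₀ * s * ⟪F s, v s⟫) + (⟪x s - xstar, v s⟫ + ⟪v s, x s - xstar⟫) / 2) s := by
    intro s hsp
    have ha : HasDerivAt (fun u : ℝ => c₀ * u) c₀ s := by
      simpa using (hasDerivAt_id s).const_mul c₀
    have hb2 : HasDerivAt D ⟪F s, v s⟫ s := (hfxD s hsp).sub_const (f xstar)
    have h1 : HasDerivAt (fun u => c₀ * u * D u) (c₀ * D s + c₀ * s * ⟪F s, v s⟫) s := by
      simpa [mul_assoc, Pi.mul_def] using ha.mul hb2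
    have h2 : HasDerivAt (fun u => ⟪x u - xstar, x u - xstar⟫ / 2)
        ((⟪x s - xstar, v s⟫ + ⟪v s, x s - xstar⟫) / 2) s := by
      exact (HasDerivAt.inner ℝ ((hxD s hsp).sub_const xstar)
        ((hxD s hsp).sub_const xstar)).div_const 2
    exact h1.add h2
  have hED_nonpos : ∀ s : ℝ, 0 < s →
      (c₀ * D s + c₀ * s * ⟪F s, v s⟫) + (⟪x s - xstar, v s⟫ + ⟪v s, x s - xstar⟫) / 2 ≤ 0 := by
    intro s hsp
    have hDle : D s ≤ ⟪F s, x s - xstar⟫ := by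
      have := hgrad (x s) xstar
      have e1 : ⟪F s, xstar - x s⟫ = -⟪F s, x s - xstar⟫ := by
        rw [← inner_neg_right]; congr 1; abel
      simp only [hDdef]
      linarith
    by_cases hF0 : F s = 0
    · have hv0 : v s = 0 := by rw [hvdef]; simp only; rw [hF0, hg_zero, neg_zero]
      have hD0 : D s = 0 := le_antisymm (by rw [hF0] at hDle; simpa using hDle) (hDnonneg s)
      simp [hv0, hD0]
    · have ha0 : 0 < ‖F s‖ := norm_pos_iff.2 hF0
      set ct := hs' ‖F s‖ / ‖F s‖ with hctdef
      have hct : c₀ ≤ ct := hdec ‖F s‖ b ha0 (hFle s hsp.le)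
      have hv : v s = -(ct • F s) := by
        rw [hvdef]; simp only; rw [hg_iso (F s) hF0]
      have e1 : ⟪F s, v s⟫ = -(ct * ⟪F s, F s⟫) := by
        rw [hv, inner_neg_right, real_inner_smul_right]
      have e2 : ⟪x s - xstar, v s⟫ = -(ct * ⟪F s, x s - xstar⟫) := by
        rw [hv, inner_neg_right, real_inner_smul_right, real_inner_comm]
      have e3 : ⟪v s, x s - xstar⟫ = -(ct * ⟪F s, x s - xstar⟫) := by
        rw [hv, inner_neg_left, real_inner_smul_left]
      rw [e1, e2, e3]
      have hFF : 0 ≤ ⟪F s, F s⟫ := real_inner_self_nonneg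
      have hctpos : 0 < ct := lt_of_lt_of_le hc₀ hct
      have hA : ct * D s ≤ ct * ⟪F s, x s - xstar⟫ :=
        mul_le_mul_of_nonneg_left hDle hctpos.le
      have hB : c₀ * D s ≤ ct * D s := mul_le_mul_of_nonneg_right hct (hDnonneg s)
      have hC : c₀ * s * -(ct * ⟪F s, F s⟫) ≤ 0 := by
        apply mul_nonpos_of_nonneg_of_nonpos
        · exact mul_nonneg hc₀.le hsp.le
        · simp only [neg_nonpos]
          exact mul_nonneg hctpos.le hFF
      clear_value ct c₀ D F v b
      linarith
  have hEcont : ContinuousOn Efun (Ici (0:ℝ)) := by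
    refine ContinuousOn.add ?_ ?_
    · exact (continuousOn_const.mul continuousOn_id).mul
        ((hf.continuous.comp_continuousOn hxcont).sub continuousOn_const)
    · exact ((hxcont.sub continuousOn_const).inner (hxcont.sub continuousOn_const)).div_const 2
  have hEanti : AntitoneOn Efun (Ici (0:ℝ)) := by
    refine antitoneOn_of_deriv_nonpos (convex_Ici 0) hEcont ?_ ?_
    · intro s hsm
      rw [interior_Ici] at hsm
      exact ((hED s hsm).differentiableAt).differentiableWithinAt
    · intro s hsm
      rw [interior_Ici] at hsm
      rw [(hED s hsm).deriv]
      exact hED_nonpos s hsm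
  intro t ht
  have hEt := hEanti self_mem_Ici (le_of_lt ht : (0:ℝ) ≤ t) ht.le
  have hE0 : Efun 0 = ⟪x₀ - xstar, x₀ - xstar⟫ / 2 := by
    simp [hEdef, hx_init]
  rw [hE0, real_inner_self_eq_norm_sq] at hEt
  have hq : 0 ≤ ⟪x t - xstar, x t - xstar⟫ := real_inner_self_nonneg
  have hkey : c₀ * t * D t ≤ ‖x₀ - xstar‖ ^ 2 / 2 := by
    have := hEt
    simp only [hEdef] at this
    linarith
  rw [hinf]
  show D t ≤ b * ‖x₀ - xstar‖ ^ 2 / (hs' b * t)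
  rw [le_div_iff₀ (mul_pos hp ht)]
  have hexp : c₀ * t * D t = hs' b * t * D t / b := by
    rw [hc₀def]; ring
  rw [hexp] at hkey
  have h3 : hs' b * t * D t ≤ b * (‖x₀ - xstar‖ ^ 2 / 2) := by
    calc hs' b * t * D t = b * (hs' b * t * D t / b) := by field_simp
    _ ≤ b * (‖x₀ - xstar‖ ^ 2 / 2) := by
        exact mul_le_mul_of_nonneg_left hkey hb.le
  have hnn : 0 ≤ b * ‖x₀ - xstar‖ ^ 2 := mul_nonneg hb.le (sq_nonneg _)
  clear_value c₀ D F v b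
  linarith
end
end

section
/- Suppose f satisfies the anisotropic gradient dominance condition: there exists μ > 0 such that φ(∇φ*(∇f(x))) ≥ μ (f(x) − f⋆) for all x ∈ ℝⁿ. Let x : [0, ∞) → ℝⁿ be the unique global solution of ẋ(t) = −∇φ*(∇f(x(t))) with x(0) = x₀. Then for all t ≥ 0, f(x(t)) − f⋆ ≤ exp(−μ t) (f(x₀) − f⋆). -/
open MeasureTheory Filter Topology Set
open scoped RealInnerProductSpace

noncomputable section

/-- Existence of the maximizer of `z ↦ ⟪z,y⟫ - φ z` for a lsc, nonneg, coercive `φ`. -/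
lemma aux_argmax {n : ℕ} (φ : EuclideanSpace ℝ (Fin n) → EReal)
    (hφ_lsc : LowerSemicontinuous φ) (hφ_nonneg : ∀ z, 0 ≤ φ z) (hφ_zero : φ 0 = 0)
    (μφ : ℝ) (hμφ : 0 < μφ)
    (hcoer : ∀ z, ((μφ / 2 * ‖z‖ ^ 2 : ℝ) : EReal) ≤ φ z)
    (y : EuclideanSpace ℝ (Fin n)) :
    ∃ (zs : EuclideanSpace ℝ (Fin n)) (c : ℝ), 0 ≤ c ∧ φ zs = (c : EReal) ∧
      ∀ z, ((⟪z, y⟫ : ℝ) : EReal) - φ z ≤ ((⟪zs, y⟫ - c : ℝ) : EReal) := by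
  classical
  -- basic facts
  have hne_bot : ∀ z, φ z ≠ ⊥ := fun z => ne_of_gt (lt_of_lt_of_le (by simp) (hφ_nonneg z))
  have htoReal : ∀ z, φ z ≠ ⊤ → φ z = ((φ z).toReal : EReal) :=
    fun z hz => (EReal.coe_toReal hz (hne_bot z)).symm
  have hcoerR : ∀ z, φ z ≠ ⊤ → μφ / 2 * ‖z‖ ^ 2 ≤ (φ z).toReal := by
    intro z hz
    have := hcoer z
    rw [htoReal z hz] at this
    exact_mod_cast this
  set R : ℝ := 2 * ‖y‖ / μφ + 1 with hR
  clear_value R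
  have hRpos : 0 < R := by
    have h9 : 0 ≤ 2 * ‖y‖ / μφ := by positivity
    linarith
  set p : EuclideanSpace ℝ (Fin n) → ℝ := fun z => (φ z).toReal - ⟪z, y⟫ with hp
  clear_value p
  set S : Set (EuclideanSpace ℝ (Fin n)) :=
    {z | φ z ≠ ⊤} ∩ Metric.closedBall 0 R with hS
  have h0S : (0 : EuclideanSpace ℝ (Fin n)) ∈ S := by
    constructor
    · simp [hφ_zero]
    · simpa using hRpos.le
  have hp0 : p 0 = 0 := by rw [hp]; simp [hφ_zero]
  have hplb : ∀ z, φ z ≠ ⊤ → μφ / 2 * ‖z‖ ^ 2 - ‖z‖ * ‖y‖ ≤ p z := by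
    intro z hz
    have h1 := hcoerR z hz
    have h2 : ⟪z, y⟫ ≤ ‖z‖ * ‖y‖ := real_inner_le_norm z y
    simp only [hp]
    linarith
  have hquad : ∀ t : ℝ, -(‖y‖ ^ 2) / (2 * μφ) ≤ μφ / 2 * t ^ 2 - t * ‖y‖ := by
    intro t
    rw [div_le_iff₀ (by positivity)]
    nlinarith [sq_nonneg (μφ * t - ‖y‖)]
  have hBdd : BddBelow (p '' S) := by
    refine ⟨-(‖y‖ ^ 2) / (2 * μφ), ?_⟩
    rintro r ⟨z, hz, rfl⟩
    have h1 := hplb z hz.1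
    have h2 := hquad ‖z‖
    linarith
  set m : ℝ := sInf (p '' S) with hm
  clear_value m
  have hmle : m ≤ 0 := by
    rw [← hp0, hm]
    exact csInf_le hBdd ⟨0, h0S, rfl⟩
  have hmleall : ∀ z ∈ S, m ≤ p z := by
    intro z hz
    rw [hm]
    exact csInf_le hBdd ⟨z, hz, rfl⟩
  -- minimizing sequence
  have hseq : ∀ k : ℕ, ∃ z ∈ S, p z < m + 1 / (k + 1) := by
    intro k
    have hlt : m < m + 1 / (k + 1) := by
      have : (0:ℝ) < 1 / (k + 1) := by positivity
      linarith
    rw [hm] at hlt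
    obtain ⟨r, ⟨z, hz, rfl⟩, hr⟩ :=
      exists_lt_of_csInf_lt (⟨p 0, ⟨0, h0S, rfl⟩⟩ : (p '' S).Nonempty) hlt
    rw [← hm] at hr
    exact ⟨z, hz, hr⟩
  choose z hzS hzp using hseq
  -- convergent subsequence
  obtain ⟨zs, hzsball, ψ, hψ, hψt⟩ :=
    (isCompact_closedBall (0 : EuclideanSpace ℝ (Fin n)) R).tendsto_subseq
      (fun k => (hzS k).2)
  -- lsc argument
  have hc : φ zs ≤ ((m + ⟪zs, y⟫ : ℝ) : EReal) := by
    by_contra hlt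
    push_neg at hlt
    obtain ⟨b, hb1, hb2⟩ := EReal.exists_between_coe_real hlt
    have hev1 : ∀ᶠ k in atTop, (b : EReal) < φ (z (ψ k)) :=
      hψt.eventually (hφ_lsc zs b hb2)
    have htend : Tendsto (fun k => m + 1 / ((ψ k : ℝ) + 1) + ⟪z (ψ k), y⟫) atTop
        (𝓝 (m + 0 + ⟪zs, y⟫)) := by
      refine Tendsto.add (Tendsto.add tendsto_const_nhds ?_) ?_
      · exact tendsto_one_div_add_atTop_nhds_zero_nat.comp hψ.tendsto_atTop
      · exact ((continuous_inner.comp (Continuous.prodMk continuous_id continuous_const)).tendsto zs).comp hψt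
    have hb1' : m + 0 + ⟪zs, y⟫ < b := by
      rw [add_zero]
      exact_mod_cast hb1
    have hev2 : ∀ᶠ k in atTop, m + 1 / ((ψ k : ℝ) + 1) + ⟪z (ψ k), y⟫ < b :=
      htend.eventually_lt_const hb1'
    obtain ⟨k, hk1, hk2⟩ := (hev1.and hev2).exists
    have hne : φ (z (ψ k)) ≠ ⊤ := (hzS (ψ k)).1
    rw [htoReal _ hne] at hk1
    have hk1' : b < (φ (z (ψ k))).toReal := by exact_mod_cast hk1
    have := hzp (ψ k)
    simp only [hp] at this
    linarith
  -- extract data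
  have hnetop : φ zs ≠ ⊤ := ne_top_of_le_ne_top (EReal.coe_ne_top _) hc
  set c : ℝ := (φ zs).toReal with hcdef
  have hφzs : φ zs = (c : EReal) := htoReal zs hnetop
  have hc0 : 0 ≤ c := by
    have := hφ_nonneg zs
    rw [hφzs] at this
    exact_mod_cast this
  have hczs : c ≤ m + ⟪zs, y⟫ := by
    rw [hφzs] at hc
    exact_mod_cast hc
  refine ⟨zs, c, hc0, hφzs, ?_⟩
  intro w
  by_cases hw : φ w = ⊤
  · rw [hw, EReal.sub_top]
    exact bot_le
  · rw [htoReal w hw, ← EReal.coe_sub, EReal.coe_le_coe_iff]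
    have hm_le : m ≤ p w := by
      by_cases hball : w ∈ Metric.closedBall (0 : EuclideanSpace ℝ (Fin n)) R
      · exact hmleall w ⟨hw, hball⟩
      · have hnorm : R < ‖w‖ := by
          simpa [Metric.mem_closedBall, dist_zero_right] using hball
        have h3 := hplb w hw
        have hy : 2 * ‖y‖ / μφ < ‖w‖ := by linarith
        have h1 : 2 * ‖y‖ < μφ * ‖w‖ := by
          rw [div_lt_iff₀ hμφ] at hy
          linarith
        have h5 : (0:ℝ) < ‖w‖ := lt_trans hRpos hnorm
        have h6 : 0 < ‖w‖ * (μφ * ‖w‖ - 2 * ‖y‖) := mul_pos h5 (by linarith)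
        have h4 : 0 < p w := by nlinarith [h6, h3]
        linarith
    simp only [hp] at hm_le
    linarith


theorem stmt_13 (n : ℕ)
    (f : EuclideanSpace ℝ (Fin n) → ℝ) (f' : EuclideanSpace ℝ (Fin n) → EuclideanSpace ℝ (Fin n))
    (hf : ContDiff ℝ 2 f)
    (hf' : ∀ z, HasGradientAt f (f' z) z)
    (hf_lb : ∀ α : ℝ, Bornology.IsBounded {z | f z ≤ α})
    (φ : EuclideanSpace ℝ (Fin n) → EReal)
    (hφ_proper : ∃ z, φ z ≠ ⊤)
    (hφ_lsc : LowerSemicontinuous φ)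
    (hφ_nonneg : ∀ z, 0 ≤ φ z)
    (hφ_even : ∀ z, φ (-z) = φ z)
    (hφ_zero : φ 0 = 0)
    (hφ_es_dom : (interior {z | φ z ≠ ⊤}).Nonempty)
    (hφ_es_diff : DifferentiableOn ℝ (fun z => (φ z).toReal) (interior {z | φ z ≠ ⊤}))
    (hφ_es_blow : ∀ w ∈ frontier {z | φ z ≠ ⊤}, ∀ seq : ℕ → EuclideanSpace ℝ (Fin n),
      (∀ k, seq k ∈ interior {z | φ z ≠ ⊤}) → Tendsto seq atTop (𝓝 w) →
      Tendsto (fun k => ‖gradient (fun z => (φ z).toReal) (seq k)‖) atTop atTop)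
    (μφ : ℝ) (hμφ : 0 < μφ)
    (hφ_sconv : ∀ z w : EuclideanSpace ℝ (Fin n), ∀ t : ℝ, 0 ≤ t → t ≤ 1 →
      φ (t • z + (1 - t) • w) + ((μφ / 2 * (t * (1 - t)) * ‖z - w‖ ^ 2 : ℝ) : EReal)
        ≤ (t : EReal) * φ z + ((1 - t : ℝ) : EReal) * φ w)
    (φs : EuclideanSpace ℝ (Fin n) → ℝ)
    (hφs_conj : ∀ y, (φs y : EReal) = ⨆ z, (((⟪z, y⟫ : ℝ) : EReal) - φ z))
    (gφs : EuclideanSpace ℝ (Fin n) → EuclideanSpace ℝ (Fin n))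
    (hgφs : ∀ y, HasGradientAt φs (gφs y) y)
    (hg_lip : ∀ y w, ‖gφs y - gφs w‖ ≤ (1 / μφ) * ‖y - w‖)
    (hg_zero : gφs 0 = 0)
    (x₀ : EuclideanSpace ℝ (Fin n)) (x : ℝ → EuclideanSpace ℝ (Fin n))
    (hx_init : x 0 = x₀)
    (hode : ∀ t ∈ Ici (0:ℝ), HasDerivWithinAt x (-gφs (f' (x t))) (Ici 0) t)
    (μ : ℝ) (hμ : 0 < μ)
    (hPL : ∀ z, ((μ * (f z - ⨅ w, f w) : ℝ) : EReal) ≤ φ (gφs (f' z)))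
    :
    ∀ t ∈ Ici (0:ℝ),
      f (x t) - (⨅ w, f w) ≤ Real.exp (-μ * t) * (f x₀ - ⨅ w, f w) := by
  have hne_bot : ∀ z, φ z ≠ ⊥ := fun z => ne_of_gt (lt_of_lt_of_le (by simp) (hφ_nonneg z))
  -- coercivity from strong convexity
  have hcoer : ∀ z, ((μφ / 2 * ‖z‖ ^ 2 : ℝ) : EReal) ≤ φ z := by
    intro z
    by_cases hz : φ z = ⊤
    · rw [hz]; exact le_top
    · have hφz : φ z = ((φ z).toReal : EReal) := (EReal.coe_toReal hz (hne_bot z)).symm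
      set a : ℝ := (φ z).toReal with ha
      have h := hφ_sconv z (-z) (1/2) (by norm_num) (by norm_num)
      have e1 : (1/2 : ℝ) • z + (1 - 1/2 : ℝ) • (-z) = 0 := by module
      have e2 : z - -z = (2:ℝ) • z := by module
      rw [e1, hφ_zero, hφ_even, hφz, zero_add, ← EReal.coe_mul, ← EReal.coe_mul,
        ← EReal.coe_add, EReal.coe_le_coe_iff, e2] at h
      have e3 : ‖(2:ℝ) • z‖ = 2 * ‖z‖ := by
        rw [norm_smul]; norm_num
      rw [e3] at h
      rw [hφz, EReal.coe_le_coe_iff]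
      nlinarith [h]
  -- the key pointwise fact: φ (gφs y) is finite and dominated by ⟪gφs y, y⟫
  have hkey : ∀ y : EuclideanSpace ℝ (Fin n), ∃ c : ℝ,
      φ (gφs y) = (c : EReal) ∧ c ≤ ⟪gφs y, y⟫ := by
    intro y
    obtain ⟨zs, c, hc0, hφzs, hmax⟩ := aux_argmax φ hφ_lsc hφ_nonneg hφ_zero μφ hμφ hcoer y
    have hterm : ∀ (w zz : EuclideanSpace ℝ (Fin n)),
        ((⟪zz, w⟫ : ℝ) : EReal) - φ zz ≤ (φs w : EReal) := by
      intro w zz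
      rw [hφs_conj w]
      exact le_iSup (fun z => ((⟪z, w⟫ : ℝ) : EReal) - φ z) zz
    have hφs_eq : φs y = ⟪zs, y⟫ - c := by
      have h1 : (φs y : EReal) ≤ ((⟪zs, y⟫ - c : ℝ) : EReal) := by
        rw [hφs_conj y]; exact iSup_le hmax
      have h2 : ((⟪zs, y⟫ - c : ℝ) : EReal) ≤ (φs y : EReal) := by
        have := hterm y zs
        rwa [hφzs, ← EReal.coe_sub] at this
      exact_mod_cast le_antisymm h1 h2
    have hφs0 : 0 ≤ φs y := by
      have := hterm y 0
      rw [hφ_zero, inner_zero_left] at this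
      simpa using this
    have hsub : ∀ w, ⟪zs, w⟫ - c ≤ φs w := by
      intro w
      have := hterm w zs
      rw [hφzs, ← EReal.coe_sub] at this
      exact_mod_cast this
    -- zs is the gradient of φs at y
    have hkeyv : ∀ v : EuclideanSpace ℝ (Fin n), ⟪gφs y, v⟫ - ⟪zs, v⟫ = 0 := by
      intro v
      set θ : ℝ → ℝ := fun t => φs (y + t • v) - (φs y + t * ⟪zs, v⟫) with hθ
      have hθ0 : θ 0 = 0 := by simp [hθ]
      have hθnn : ∀ t, 0 ≤ θ t := by
        intro t
        have h1 := hsub (y + t • v)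
        have h2 : ⟪zs, y + t • v⟫ = ⟪zs, y⟫ + t * ⟪zs, v⟫ := by
          rw [inner_add_right, real_inner_smul_right]
        simp only [hθ]
        rw [hφs_eq]
        rw [h2] at h1
        linarith
      have hφsd : HasDerivAt (fun t : ℝ => φs (y + t • v)) ⟪gφs y, v⟫ 0 := by
        have hline : HasDerivAt (fun t : ℝ => y + t • v) v 0 := by
          simpa using ((hasDerivAt_id (0:ℝ)).smul_const v).const_add y
        have hfd : HasFDerivAt φs (InnerProductSpace.toDual ℝ _ (gφs y)) (y + (0:ℝ) • v) := by
          simpa using (hgφs y).hasFDerivAt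
        have := hfd.comp_hasDerivAt (0:ℝ) hline
        simpa [InnerProductSpace.toDual_apply_apply, Function.comp_def] using this
      have hθd : HasDerivAt θ (⟪gφs y, v⟫ - ⟪zs, v⟫) 0 := by
        have h2 : HasDerivAt (fun t : ℝ => φs y + t * ⟪zs, v⟫) ⟪zs, v⟫ 0 := by
          simpa using ((hasDerivAt_id (0:ℝ)).mul_const ⟪zs, v⟫).const_add (φs y)
        simpa [hθ, Pi.sub_def] using hφsd.sub h2
      have hmin : IsLocalMin θ 0 :=
        Filter.Eventually.of_forall fun t => hθ0.trans_le (hθnn t)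
      exact hmin.hasDerivAt_eq_zero hθd
    have hzsg : zs = gφs y := by
      have h := hkeyv (gφs y - zs)
      rw [← inner_sub_left] at h
      exact (sub_eq_zero.mp (inner_self_eq_zero.mp h)).symm
    refine ⟨c, hzsg ▸ hφzs, ?_⟩
    rw [← hzsg]
    linarith [hφs0, hφs_eq.symm.le]
  -- pointwise differential inequality ingredient
  set L : ℝ := ⨅ w, f w with hL
  have key2 : ∀ w : EuclideanSpace ℝ (Fin n),
      μ * (f w - L) ≤ ⟪f' w, gφs (f' w)⟫ := by
    intro w
    obtain ⟨c, h1, h2⟩ := hkey (f' w)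
    have h3 := hPL w
    rw [h1, EReal.coe_le_coe_iff] at h3
    calc μ * (f w - L) ≤ c := h3
    _ ≤ ⟪gφs (f' w), f' w⟫ := h2
    _ = ⟪f' w, gφs (f' w)⟫ := real_inner_comm _ _
  -- Gronwall-type argument
  set h : ℝ → ℝ := fun t => Real.exp (μ * t) * (f (x t) - L) with hh
  set D : ℝ → ℝ := fun t =>
    Real.exp (μ * t) * μ * (f (x t) - L) + Real.exp (μ * t) * ⟪f' (x t), -gφs (f' (x t))⟫
    with hD
  have hFd : ∀ t ∈ Ici (0:ℝ),
      HasDerivWithinAt (fun s => f (x s)) ⟪f' (x t), -gφs (f' (x t))⟫ (Ici 0) t := by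
    intro t ht
    have hfd : HasFDerivAt f (InnerProductSpace.toDual ℝ _ (f' (x t))) (x t) :=
      (hf' (x t)).hasFDerivAt
    have := hfd.comp_hasDerivWithinAt t (hode t ht)
    simpa [InnerProductSpace.toDual_apply_apply, Function.comp_def] using this
  have hhd : ∀ t ∈ Ici (0:ℝ), HasDerivWithinAt h (D t) (Ici 0) t := by
    intro t ht
    have he : HasDerivAt (fun s : ℝ => Real.exp (μ * s)) (Real.exp (μ * t) * μ) t := by
      simpa [Function.comp_def] using (Real.hasDerivAt_exp (μ * t)).comp t ((hasDerivAt_id t).const_mul μ)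
    have := (he.hasDerivWithinAt (s := Ici 0)).mul ((hFd t ht).sub_const L)
    simp only [hh, hD]
    exact this
  have hnonpos : ∀ t ∈ Ici (0:ℝ), D t ≤ 0 := by
    intro t _
    have h1 := key2 (x t)
    have h2 : (0:ℝ) < Real.exp (μ * t) := Real.exp_pos _
    simp only [hD, inner_neg_right]
    nlinarith [h1, h2]
  have hanti : AntitoneOn h (Ici 0) := by
    refine antitoneOn_of_hasDerivWithinAt_nonpos (f' := D) (convex_Ici 0) ?_ ?_ ?_
    · exact fun t ht => (hhd t ht).continuousWithinAt
    · intro t ht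
      rw [interior_Ici] at ht ⊢
      exact (hhd t (Ioi_subset_Ici_self ht)).mono Ioi_subset_Ici_self
    · intro t ht
      rw [interior_Ici] at ht
      exact hnonpos t (Ioi_subset_Ici_self ht)
  intro t ht
  have hle : h t ≤ h 0 := hanti Set.self_mem_Ici ht ht
  have h00 : h 0 = f x₀ - L := by simp [hh, hx_init]
  rw [h00] at hle
  simp only [hh] at hle
  have h3 : (0:ℝ) < Real.exp (μ * t) := Real.exp_pos _
  rw [neg_mul, Real.exp_neg]
  calc f (x t) - L = (Real.exp (μ*t))⁻¹ * (Real.exp (μ*t) * (f (x t) - L)) := by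
        field_simp
    _ ≤ (Real.exp (μ*t))⁻¹ * (f x₀ - L) :=
        mul_le_mul_of_nonneg_left hle (inv_nonneg.mpr h3.le)
end
end
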